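/- Let ε_m = −1 if m ≡ ±1 (mod 12), ε_m = +1 if m ≡ ±5 (mod 12), ε_m = 0 otherwise, and for j = 0, 1, 2, 3 let G_j ∈ ℤ[x, x^{−1}]((q)) be the (coefficientwise finite) double sum over odd m₁, m₂ ≥ 1 of ε_{m₁} ε_{m₂} q^{(m₁²+m₂²−2)/24} (x^{(m₁+m₂)/2} q^{j(m₁+m₂)/2} + x^{−(m₁+m₂)/2} q^{−j(m₁+m₂)/2} − x^{(m₁−m₂)/2} q^{j(m₁−m₂)/2} − x^{(m₂−m₁)/2} q^{j(m₂−m₁)/2}), so that (1/4)G_j = F_{T(2,3)}(xq^j, q)². Then r₀ G₀ + r₁ G₁ + r₂ G₂ + r₃ G₃ = 0, where r₀ = −q + (q⁴+q⁶)x² + q⁶x³ − q⁹x⁴ − 2q¹¹x⁵ + q¹⁶x⁷; r₁ = 1 + (−2q+q³−q⁵)x² − 2q²x³ + (q²−2q⁴+3q⁶−q⁸)x⁴ + (2q³+2q⁷)x⁵ + (q⁴+q⁵−2q⁷+3q⁹−q¹¹)x⁶ − 2q⁸x⁷ + (−q⁷−q⁹−2q¹⁰+q¹²−q¹⁴)x⁸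 − q⁹x⁹ + (q¹²+q¹⁵)x¹⁰ + 2q¹⁴x¹¹ − q¹⁹x¹³; r₂ = q⁴x³ − 2q⁵x⁵ + (−q⁶−q⁹)x⁶ + q⁶x⁷ + (q⁷+q⁹+2q¹⁰−q¹²+q¹⁴)x⁸ + 2q¹¹x⁹ + (−q¹⁰−q¹¹+2q¹³−3q¹⁵+q¹⁷)x¹⁰ + (−2q¹²−2q¹⁶)x¹¹ + (−q¹⁴+2q¹⁶−3q¹⁸+q²⁰)x¹² + 2q¹⁷x¹³ + (2q¹⁹−q²¹+q²³)x¹⁴ − q²⁴x¹⁶; r₃ = −q¹⁹x⁹ + 2q²⁰x¹¹ + q²¹x¹² − q²¹x¹³ + (−q²²−q²⁴)x¹⁴ + q²⁵x¹⁶. This is the minimal-degree homogeneous recursion r₀ F_{T(2,3)}(x,q)² + r₁ F_{T(2,3)}(xq,q)² + r₂ F_{T(2,3)}(xq²,q)² + r₃ F_{T(2,3)}(xq³,q)² = 0 satisfied by the proposed connected-sum series of T(2,3) # T(2,3). -/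
import Mathlib


set_option maxHeartbeats 1000000

open scoped Classical in
/-- The sign function for the right-handed trefoil `T(2,3)`:
`ε_m = −1` if `m ≡ ±1 (mod 12)`, `ε_m = +1` if `m ≡ ±5 (mod 12)`, `ε_m = 0` otherwise. -/
noncomputable def trefoilEps (m : ℤ) : ℤ :=
  if (m ≡ 1 [ZMOD 12] ∨ m ≡ -1 [ZMOD 12]) then -1
  else if (m ≡ 5 [ZMOD 12] ∨ m ≡ -5 [ZMOD 12]) then 1
  else 0

open scoped Classical in
/-- The coefficient of `x^a q^n` in `G_j`, the double sum over odd `m₁, m₂ ≥ 1` of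
`ε_{m₁} ε_{m₂} q^{(m₁²+m₂²−2)/24} (x^{(m₁+m₂)/2} q^{j(m₁+m₂)/2} + x^{−(m₁+m₂)/2} q^{−j(m₁+m₂)/2}
 − x^{(m₁−m₂)/2} q^{j(m₁−m₂)/2} − x^{(m₂−m₁)/2} q^{j(m₂−m₁)/2})`,
so that `(1/4)G_j = F_{T(2,3)}(xq^j, q)²`.  Each monomial of a pair `(m₁,m₂)` has the
form `x^c q^{(m₁²+m₂²−2)/24 + jc}`, so it contributes to `(a,n)` iff `c = a` and
`24(n − ja) = m₁² + m₂² − 2`; the (coefficientwise finite) sum is taken via `finsum`. -/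
noncomputable def coeffG (j : ℕ) (a n : ℤ) : ℤ :=
  ∑ᶠ p : ℤ × ℤ,
    if 1 ≤ p.1 ∧ Odd p.1 ∧ 1 ≤ p.2 ∧ Odd p.2 ∧
        24 * (n - (j : ℤ) * a) = p.1 ^ 2 + p.2 ^ 2 - 2 then
      trefoilEps p.1 * trefoilEps p.2 *
        ((if 2 * a = p.1 + p.2 then 1 else 0) + (if 2 * a = -(p.1 + p.2) then 1 else 0)
          - (if 2 * a = p.1 - p.2 then 1 else 0) - (if 2 * a = p.2 - p.1 then 1 else 0))
    else 0

/-- The variable `q`, as an element of `ℤ[q]`. -/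
noncomputable def Qv : Polynomial ℤ := Polynomial.X

/-- The variable `x`, as an element of `(ℤ[q])[x]`. -/
noncomputable def Xv : Polynomial (Polynomial ℤ) := Polynomial.X

/-- The embedding `ℤ[q] → (ℤ[q])[x]`. -/
noncomputable def Cq : Polynomial ℤ → Polynomial (Polynomial ℤ) := Polynomial.C

/-- `r₀ = −q + (q⁴+q⁶)x² + q⁶x³ − q⁹x⁴ − 2q¹¹x⁵ + q¹⁶x⁷`. -/
noncomputable def trefoilR0 : Polynomial (Polynomial ℤ) :=
  Cq (-Qv) + Cq (Qv^4 + Qv^6) * Xv^2 + Cq (Qv^6) * Xv^3 - Cq (Qv^9) * Xv^4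
    - Cq (2*Qv^11) * Xv^5 + Cq (Qv^16) * Xv^7

/-- `r₁ = 1 + (−2q+q³−q⁵)x² − 2q²x³ + (q²−2q⁴+3q⁶−q⁸)x⁴ + (2q³+2q⁷)x⁵
  + (q⁴+q⁵−2q⁷+3q⁹−q¹¹)x⁶ − 2q⁸x⁷ + (−q⁷−q⁹−2q¹⁰+q¹²−q¹⁴)x⁸ − q⁹x⁹
  + (q¹²+q¹⁵)x¹⁰ + 2q¹⁴x¹¹ − q¹⁹x¹³`. -/
noncomputable def trefoilR1 : Polynomial (Polynomial ℤ) :=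
  1 + Cq (-2*Qv + Qv^3 - Qv^5) * Xv^2 - Cq (2*Qv^2) * Xv^3
    + Cq (Qv^2 - 2*Qv^4 + 3*Qv^6 - Qv^8) * Xv^4 + Cq (2*Qv^3 + 2*Qv^7) * Xv^5
    + Cq (Qv^4 + Qv^5 - 2*Qv^7 + 3*Qv^9 - Qv^11) * Xv^6 - Cq (2*Qv^8) * Xv^7
    + Cq (-Qv^7 - Qv^9 - 2*Qv^10 + Qv^12 - Qv^14) * Xv^8 - Cq (Qv^9) * Xv^9
    + Cq (Qv^12 + Qv^15) * Xv^10 + Cq (2*Qv^14) * Xv^11 - Cq (Qv^19) * Xv^13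

/-- `r₂ = q⁴x³ − 2q⁵x⁵ + (−q⁶−q⁹)x⁶ + q⁶x⁷ + (q⁷+q⁹+2q¹⁰−q¹²+q¹⁴)x⁸ + 2q¹¹x⁹
  + (−q¹⁰−q¹¹+2q¹³−3q¹⁵+q¹⁷)x¹⁰ + (−2q¹²−2q¹⁶)x¹¹ + (−q¹⁴+2q¹⁶−3q¹⁸+q²⁰)x¹²
  + 2q¹⁷x¹³ + (2q¹⁹−q²¹+q²³)x¹⁴ − q²⁴x¹⁶`. -/
noncomputable def trefoilR2 : Polynomial (Polynomial ℤ) :=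
  Cq (Qv^4) * Xv^3 - Cq (2*Qv^5) * Xv^5 + Cq (-Qv^6 - Qv^9) * Xv^6 + Cq (Qv^6) * Xv^7
    + Cq (Qv^7 + Qv^9 + 2*Qv^10 - Qv^12 + Qv^14) * Xv^8 + Cq (2*Qv^11) * Xv^9
    + Cq (-Qv^10 - Qv^11 + 2*Qv^13 - 3*Qv^15 + Qv^17) * Xv^10
    + Cq (-2*Qv^12 - 2*Qv^16) * Xv^11 + Cq (-Qv^14 + 2*Qv^16 - 3*Qv^18 + Qv^20) * Xv^12
    + Cq (2*Qv^17) * Xv^13 + Cq (2*Qv^19 - Qv^21 + Qv^23) * Xv^14 - Cq (Qv^24) * Xv^16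

/-- `r₃ = −q¹⁹x⁹ + 2q²⁰x¹¹ + q²¹x¹² − q²¹x¹³ + (−q²²−q²⁴)x¹⁴ + q²⁵x¹⁶`. -/
noncomputable def trefoilR3 : Polynomial (Polynomial ℤ) :=
  -(Cq (Qv^19) * Xv^9) + Cq (2*Qv^20) * Xv^11 + Cq (Qv^21) * Xv^12 - Cq (Qv^21) * Xv^13
    + Cq (-Qv^22 - Qv^24) * Xv^14 + Cq (Qv^25) * Xv^16

/-- The four recursion coefficients `r₀, r₁, r₂, r₃ ∈ ℤ[x,q]`, as elements of
`(ℤ[q])[x]` (outer variable `x`, inner variable `q`). -/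
noncomputable def trefoilRec : ℕ → Polynomial (Polynomial ℤ)
  | 0 => trefoilR0
  | 1 => trefoilR1
  | 2 => trefoilR2
  | 3 => trefoilR3
  | _ => 0
-- ===== auxiliary development =====

/-- `ε` is invariant under negation. -/
lemma trefoilEps_neg (m : ℤ) : trefoilEps (-m) = trefoilEps m := by
  simp only [trefoilEps, Int.ModEq]
  split_ifs <;> omega

/-- `ε` of an even integer vanishes. -/
lemma trefoilEps_even (m : ℤ) (h : m % 2 = 0) : trefoilEps m = 0 := by
  simp only [trefoilEps, Int.ModEq]
  split_ifs <;> omega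

/-- `ε m + ε (m-6) = 0`. -/
lemma trefoilEps_shift (m : ℤ) : trefoilEps m + trefoilEps (m - 6) = 0 := by
  simp only [trefoilEps, Int.ModEq]
  split_ifs <;> omega

/-- The signed coefficient function `e(m) = sgn(m) ε(m)` of `f = 2 F_{T(2,3)}`. -/
noncomputable def ee (m : ℤ) : ℤ := if 0 ≤ m then trefoilEps m else -trefoilEps m

lemma ee_neg (m : ℤ) : ee (-m) = -ee m := by
  unfold ee
  rcases lt_trichotomy m 0 with h | h | h
  · rw [if_pos (by omega), if_neg (by omega), trefoilEps_neg, neg_neg]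
  · subst h; norm_num [trefoilEps_even 0 (by norm_num)]
  · rw [if_neg (by omega), if_pos (by omega), trefoilEps_neg]

lemma ee_even (m : ℤ) (h : m % 2 = 0) : ee m = 0 := by
  unfold ee; rw [trefoilEps_even m h]; simp

/-- The key first-order relation on coefficients:
`e(m) + e(m-6) = -2·[m=1] + 2·[m=5]`. -/
lemma ee_key (m : ℤ) :
    ee m + ee (m - 6) = -2 * (if m = 1 then (1:ℤ) else 0) + 2 * (if m = 5 then (1:ℤ) else 0) := by
  rcases le_or_gt 7 m with h | h
  · have hs := trefoilEps_shift m
    rw [if_neg (by omega), if_neg (by omega)]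
    unfold ee
    rw [if_pos (by omega), if_pos (by omega)]
    linarith
  · rcases lt_or_ge m 0 with h2 | h2
    · have hs := trefoilEps_shift m
      rw [if_neg (by omega), if_neg (by omega)]
      unfold ee
      rw [if_neg (by omega), if_neg (by omega)]
      linarith
    · interval_cases m <;>
        norm_num [ee, trefoilEps, Int.ModEq]

open scoped Classical in
/-- Coefficient of `X^M Q^N` (doubled exponents, `X = x^{1/2}`, `Q = q^{1/2}`) in
`f(x q^j)`, where `f = 2 F_{T(2,3)}`. -/
noncomputable def Fc (j M N : ℤ) : ℤ :=
  if 12*N = M^2 - 1 + 12*j*M then ee M else 0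

/-- The first-order inhomogeneous recursion `f(xq^j) = -x^3 q^{3(2j+1)/2} f(xq^{j+1}) - 2 x^{1/2} q^{j/2} + 2 x^{5/2} q^{(5j+2)/2}`, coefficientwise, with explicitly supplied delta terms. -/
lemma FcStep (j M N d1 d2 : ℤ)
    (h1 : d1 = (if M = 1 ∧ N = j then (1:ℤ) else 0))
    (h2 : d2 = (if M = 5 ∧ N = 5*j+2 then (1:ℤ) else 0)) :
    Fc j M N = -Fc (j+1) (M-6) (N-6*j-3) - 2*d1 + 2*d2 := by
  subst h1 h2
  unfold Fc
  by_cases hc : 12*N = M^2 - 1 + 12*j*M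
  · rw [if_pos hc,
      if_pos (show 12*(N-6*j-3) = (M-6)^2 - 1 + 12*(j+1)*(M-6) by linear_combination hc)]
    have e1 : (if M = 1 ∧ N = j then (1:ℤ) else 0) = (if M = 1 then (1:ℤ) else 0) := by
      refine if_congr ⟨fun h => h.1, fun h => ⟨h, ?_⟩⟩ rfl rfl
      subst h; norm_num at hc; omega
    have e2 : (if M = 5 ∧ N = 5*j+2 then (1:ℤ) else 0) = (if M = 5 then (1:ℤ) else 0) := by
      refine if_congr ⟨fun h => h.1, fun h => ⟨h, ?_⟩⟩ rfl rfl
      subst h; norm_num at hc; omega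
    rw [e1, e2]
    have := ee_key M
    linarith
  · rw [if_neg hc,
      if_neg (show ¬(12*(N-6*j-3) = (M-6)^2 - 1 + 12*(j+1)*(M-6)) from
        fun h => hc (by linear_combination h)),
      if_neg (show ¬(M = 1 ∧ N = j) from fun ⟨hM, hN⟩ => hc (by subst hM hN; ring)),
      if_neg (show ¬(M = 5 ∧ N = 5*j+2) from fun ⟨hM, hN⟩ => hc (by subst hM hN; ring))]
    ring

open scoped Classical in
/-- Summand of the coefficient of `X^A Q^T` in `f(xq^{j1}) f(xq^{j2})` (doubled exponents). -/
noncomputable def psummand (j1 j2 A T M : ℤ) : ℤ :=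
  ee M * ee (A - M) *
    (if 12*T = M^2 + (A-M)^2 - 2 + 12*(j1*M + j2*(A-M)) then 1 else 0)

lemma psummand_support (j1 j2 A T : ℤ) :
    (Function.support (psummand j1 j2 A T)).Finite := by
  set R : ℤ := 12*T + 2 + 36*j1^2 + 36*j2^2 with hR
  apply Set.Finite.subset (Set.finite_Icc (-R - 1 - 6*j1) (R + 1 - 6*j1))
  intro M hM
  rw [Function.mem_support] at hM
  unfold psummand at hM
  by_cases hc : 12*T = M^2 + (A-M)^2 - 2 + 12*(j1*M + j2*(A-M))
  · have h2 : (M + 6*j1)^2 + (A - M + 6*j2)^2 = R := by rw [hR]; linear_combination -hc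
    have h3 : (M + 6*j1)^2 ≤ R := by nlinarith [sq_nonneg (A - M + 6*j2)]
    constructor
    · nlinarith [sq_nonneg (M + 6*j1 + 1)]
    · nlinarith [sq_nonneg (M + 6*j1 - 1)]
  · rw [if_neg hc] at hM; simp at hM

/-- The product series coefficient: `4 F(xq^{j1}) F(xq^{j2})` at `X^A Q^T`. -/
noncomputable def pairSum (j1 j2 A T : ℤ) : ℤ := ∑ᶠ M : ℤ, psummand j1 j2 A T M

/-- Symmetry of the two slots. -/
lemma pairSum_symm (j1 j2 A T : ℤ) : pairSum j1 j2 A T = pairSum j2 j1 A T := by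
  unfold pairSum
  rw [← finsum_comp_equiv (Equiv.subLeft A)]
  apply finsum_congr
  intro M
  unfold psummand
  simp only [Equiv.subLeft_apply]
  simp only [show A - (A - M) = M from by ring]
  by_cases hc : 12*T = M^2 + (A-M)^2 - 2 + 12*(j2*M + j1*(A-M))
  · rw [if_pos hc, if_pos (show 12*T = (A-M)^2 + M^2 - 2 + 12*(j1*(A-M) + j2*M) from by
      linear_combination hc)]
    ring
  · rw [if_neg (show ¬(12*T = (A-M)^2 + M^2 - 2 + 12*(j1*(A-M) + j2*M)) from
      fun h => hc (by linear_combination h)), if_neg hc]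
    ring

/-- Step in the first slot. -/
lemma pairSum_step1 (j1 j2 A T : ℤ) :
    pairSum j1 j2 A T = -pairSum (j1+1) j2 (A-6) (T-6*j1-3)
      - 2 * Fc j2 (A-1) (T-j1) + 2 * Fc j2 (A-5) (T-5*j1-2) := by
  have hshift : pairSum (j1+1) j2 (A-6) (T-6*j1-3)
      = ∑ᶠ M : ℤ, psummand (j1+1) j2 (A-6) (T-6*j1-3) (M - 6) := by
    unfold pairSum
    rw [← finsum_comp_equiv (Equiv.subRight (6:ℤ))]
    rfl
  have hfin2 : (Function.support fun M : ℤ =>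
      psummand (j1+1) j2 (A-6) (T-6*j1-3) (M - 6)).Finite := by
    apply Set.Finite.subset ((psummand_support (j1+1) j2 (A-6) (T-6*j1-3)).image (· + 6))
    intro M hM
    rw [Function.mem_support] at hM
    exact ⟨M - 6, hM, by ring⟩
  have key : pairSum j1 j2 A T + pairSum (j1+1) j2 (A-6) (T-6*j1-3)
      = -2 * Fc j2 (A-1) (T-j1) + 2 * Fc j2 (A-5) (T-5*j1-2) := by
    rw [hshift]
    unfold pairSum
    rw [← finsum_add_distrib (psummand_support j1 j2 A T) hfin2]
    have hpt : ∀ M : ℤ, psummand j1 j2 A T M + psummand (j1+1) j2 (A-6) (T-6*j1-3) (M-6)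
        = (-2) * (if M = 1 then Fc j2 (A-1) (T-j1) else 0)
          + 2 * (if M = 5 then Fc j2 (A-5) (T-5*j1-2) else 0) := by
      intro M
      unfold psummand
      simp only [show A - 6 - (M - 6) = A - M from by ring]
      rw [show (if 12*(T-6*j1-3) = (M-6)^2 + (A-M)^2 - 2 + 12*((j1+1)*(M-6) + j2*(A-M))
            then (1:ℤ) else 0)
          = (if 12*T = M^2 + (A-M)^2 - 2 + 12*(j1*M + j2*(A-M)) then (1:ℤ) else 0) from
        if_congr (by constructor <;> intro h <;> linear_combination h) rfl rfl]
      have hEE := ee_key M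
      have W1 : (if M = 1 then (1:ℤ) else 0)
            * (ee (A - M) * (if 12*T = M^2 + (A-M)^2 - 2 + 12*(j1*M + j2*(A-M))
                then (1:ℤ) else 0))
          = (if M = 1 then Fc j2 (A-1) (T-j1) else 0) := by
        by_cases h1 : M = 1
        · subst h1
          rw [if_pos rfl, if_pos rfl]
          unfold Fc
          rw [show (if 12*T = (1:ℤ)^2 + (A-1)^2 - 2 + 12*(j1*1 + j2*(A-1)) then (1:ℤ) else 0)
              = (if 12*(T-j1) = (A-1)^2 - 1 + 12*j2*(A-1) then (1:ℤ) else 0) from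
            if_congr (by constructor <;> intro h <;> linear_combination h) rfl rfl]
          split_ifs <;> ring
        · rw [if_neg h1, if_neg h1]; ring
      have W5 : (if M = 5 then (1:ℤ) else 0)
            * (ee (A - M) * (if 12*T = M^2 + (A-M)^2 - 2 + 12*(j1*M + j2*(A-M))
                then (1:ℤ) else 0))
          = (if M = 5 then Fc j2 (A-5) (T-5*j1-2) else 0) := by
        by_cases h5 : M = 5
        · subst h5
          rw [if_pos rfl, if_pos rfl]
          unfold Fc
          rw [show (if 12*T = (5:ℤ)^2 + (A-5)^2 - 2 + 12*(j1*5 + j2*(A-5)) then (1:ℤ) else 0)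
              = (if 12*(T-5*j1-2) = (A-5)^2 - 1 + 12*j2*(A-5) then (1:ℤ) else 0) from
            if_congr (by constructor <;> intro h <;> linear_combination h) rfl rfl]
          split_ifs <;> ring
        · rw [if_neg h5, if_neg h5]; ring
      linear_combination
        (ee (A - M) * (if 12*T = M^2 + (A-M)^2 - 2 + 12*(j1*M + j2*(A-M)) then (1:ℤ) else 0))
          * hEE + (-2) * W1 + 2 * W5
    rw [finsum_congr hpt]
    rw [finsum_add_distrib
      (Set.Finite.subset (Set.finite_singleton 1) (by
        intro M hM; rw [Function.mem_support] at hM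
        by_contra hne; rw [Set.mem_singleton_iff] at hne
        rw [if_neg hne] at hM; simp at hM))
      (Set.Finite.subset (Set.finite_singleton 5) (by
        intro M hM; rw [Function.mem_support] at hM
        by_contra hne; rw [Set.mem_singleton_iff] at hne
        rw [if_neg hne] at hM; simp at hM))]
    rw [finsum_eq_single _ (1:ℤ) (fun x hx => by rw [if_neg hx]; ring),
        finsum_eq_single _ (5:ℤ) (fun x hx => by rw [if_neg hx]; ring)]
    rw [if_pos rfl, if_pos rfl]
  linarith

/-- Step in the second slot. -/
lemma pairSum_step2 (j1 j2 A T : ℤ) :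
    pairSum j1 j2 A T = -pairSum j1 (j2+1) (A-6) (T-6*j2-3)
      - 2 * Fc j1 (A-1) (T-j2) + 2 * Fc j1 (A-5) (T-5*j2-2) := by
  rw [pairSum_symm j1 j2, pairSum_step1 j2 j1, pairSum_symm (j2+1) j1]

open scoped Classical in
/-- One signed quadrant piece of the double sum defining `coeffG`. -/
noncomputable def Qp (w a e1 e2 : ℤ) (p : ℤ × ℤ) : ℤ :=
  if (1 ≤ p.1 ∧ Odd p.1 ∧ 1 ≤ p.2 ∧ Odd p.2 ∧ 24*w = p.1^2 + p.2^2 - 2 ∧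
      2*a = e1*p.1 + e2*p.2)
  then trefoilEps p.1 * trefoilEps p.2 else 0

lemma Qp_support (w a e1 e2 : ℤ) : (Function.support (Qp w a e1 e2)).Finite := by
  apply Set.Finite.subset (Set.finite_Icc ((1:ℤ),(1:ℤ)) ((24*w+2, 24*w+2) : ℤ × ℤ))
  intro p hp
  rw [Function.mem_support] at hp
  unfold Qp at hp
  by_cases hc : (1 ≤ p.1 ∧ Odd p.1 ∧ 1 ≤ p.2 ∧ Odd p.2 ∧ 24*w = p.1^2 + p.2^2 - 2 ∧
      2*a = e1*p.1 + e2*p.2)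
  · obtain ⟨h1, -, h3, -, h5, -⟩ := hc
    rw [Set.mem_Icc]
    refine ⟨⟨h1, h3⟩, ⟨?_, ?_⟩⟩ <;> dsimp only <;>
      nlinarith [sq_nonneg (p.1 - 1), sq_nonneg (p.2 - 1)]
  · rw [if_neg hc] at hp; exact absurd rfl hp

lemma Qp_reindex (w a e1 e2 : ℤ) (σ : ℤ → ℤ × ℤ) (hinj : Function.Injective σ)
    (hrange : ∀ p, Qp w a e1 e2 p ≠ 0 → p ∈ Set.range σ) :
    ∑ᶠ p : ℤ × ℤ, Qp w a e1 e2 p = ∑ᶠ M : ℤ, Qp w a e1 e2 (σ M) := by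
  rw [← finsum_mem_univ]
  rw [finsum_mem_inter_support_eq' (Qp w a e1 e2) Set.univ (Set.range σ)
    (fun x hx => by simp only [Set.mem_univ, true_iff]; exact hrange x hx)]
  exact finsum_mem_range hinj

lemma Qp_comp_support (w a e1 e2 : ℤ) (σ : ℤ → ℤ × ℤ) (hinj : Function.Injective σ) :
    (Function.support fun M => Qp w a e1 e2 (σ M)).Finite := by
  have hco : (fun M => Qp w a e1 e2 (σ M)) = (Qp w a e1 e2) ∘ σ := rfl
  rw [hco, Function.support_comp_eq_preimage]
  exact Set.Finite.preimage hinj.injOn (Qp_support w a e1 e2)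

lemma Qp_cond_of_ne (w a e1 e2 : ℤ) (p : ℤ × ℤ) (h : Qp w a e1 e2 p ≠ 0) :
    1 ≤ p.1 ∧ Odd p.1 ∧ 1 ≤ p.2 ∧ Odd p.2 ∧ 24*w = p.1^2 + p.2^2 - 2 ∧
      2*a = e1*p.1 + e2*p.2 := by
  unfold Qp at h
  by_cases hc : (1 ≤ p.1 ∧ Odd p.1 ∧ 1 ≤ p.2 ∧ Odd p.2 ∧ 24*w = p.1^2 + p.2^2 - 2 ∧
      2*a = e1*p.1 + e2*p.2)
  · exact hc
  · rw [if_neg hc] at h; exact absurd rfl h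

/-- Lemma A:  `coeffG j a n` is the coefficient of `X^{2a} Q^{2n}` in `f(xq^j)²`. -/
lemma coeffG_eq_pairSum (j : ℕ) (a n : ℤ) :
    coeffG j a n = pairSum (j:ℤ) (j:ℤ) (2*a) (2*n) := by
  set w : ℤ := n - (j:ℤ)*a with hw
  -- step 1: decompose the summand into four signed pieces
  have hstep1 : ∀ p : ℤ × ℤ,
      (if 1 ≤ p.1 ∧ Odd p.1 ∧ 1 ≤ p.2 ∧ Odd p.2 ∧
          24 * (n - (j:ℤ) * a) = p.1 ^ 2 + p.2 ^ 2 - 2 then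
        trefoilEps p.1 * trefoilEps p.2 *
          ((if 2 * a = p.1 + p.2 then 1 else 0) + (if 2 * a = -(p.1 + p.2) then 1 else 0)
            - (if 2 * a = p.1 - p.2 then 1 else 0) - (if 2 * a = p.2 - p.1 then 1 else 0))
      else 0)
      = Qp w a 1 1 p + Qp w a (-1) (-1) p - Qp w a 1 (-1) p - Qp w a (-1) 1 p := by
    intro p
    unfold Qp
    rw [← hw]
    by_cases hC : 1 ≤ p.1 ∧ Odd p.1 ∧ 1 ≤ p.2 ∧ Odd p.2 ∧ 24 * w = p.1 ^ 2 + p.2 ^ 2 - 2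
    · obtain ⟨h1, h2, h3, h4, h5⟩ := hC
      rw [if_pos ⟨h1, h2, h3, h4, h5⟩]
      rw [show (if (1 ≤ p.1 ∧ Odd p.1 ∧ 1 ≤ p.2 ∧ Odd p.2 ∧ 24*w = p.1^2 + p.2^2 - 2 ∧
            2*a = 1*p.1 + 1*p.2) then trefoilEps p.1 * trefoilEps p.2 else 0)
          = (if 2*a = p.1 + p.2 then trefoilEps p.1 * trefoilEps p.2 else 0) from
        if_congr ⟨fun h => by linarith [h.2.2.2.2.2], fun h => ⟨h1,h2,h3,h4,h5, by linarith⟩⟩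
          rfl rfl]
      rw [show (if (1 ≤ p.1 ∧ Odd p.1 ∧ 1 ≤ p.2 ∧ Odd p.2 ∧ 24*w = p.1^2 + p.2^2 - 2 ∧
            2*a = -1*p.1 + -1*p.2) then trefoilEps p.1 * trefoilEps p.2 else 0)
          = (if 2*a = -(p.1 + p.2) then trefoilEps p.1 * trefoilEps p.2 else 0) from
        if_congr ⟨fun h => by linarith [h.2.2.2.2.2], fun h => ⟨h1,h2,h3,h4,h5, by linarith⟩⟩
          rfl rfl]
      rw [show (if (1 ≤ p.1 ∧ Odd p.1 ∧ 1 ≤ p.2 ∧ Odd p.2 ∧ 24*w = p.1^2 + p.2^2 - 2 ∧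
            2*a = 1*p.1 + -1*p.2) then trefoilEps p.1 * trefoilEps p.2 else 0)
          = (if 2*a = p.1 - p.2 then trefoilEps p.1 * trefoilEps p.2 else 0) from
        if_congr ⟨fun h => by linarith [h.2.2.2.2.2], fun h => ⟨h1,h2,h3,h4,h5, by linarith⟩⟩
          rfl rfl]
      rw [show (if (1 ≤ p.1 ∧ Odd p.1 ∧ 1 ≤ p.2 ∧ Odd p.2 ∧ 24*w = p.1^2 + p.2^2 - 2 ∧
            2*a = -1*p.1 + 1*p.2) then trefoilEps p.1 * trefoilEps p.2 else 0)
          = (if 2*a = p.2 - p.1 then trefoilEps p.1 * trefoilEps p.2 else 0) from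
        if_congr ⟨fun h => by linarith [h.2.2.2.2.2], fun h => ⟨h1,h2,h3,h4,h5, by linarith⟩⟩
          rfl rfl]
      split_ifs <;> ring
    · rw [if_neg hC,
        if_neg (fun h => hC ⟨h.1, h.2.1, h.2.2.1, h.2.2.2.1, h.2.2.2.2.1⟩),
        if_neg (fun h => hC ⟨h.1, h.2.1, h.2.2.1, h.2.2.2.1, h.2.2.2.2.1⟩),
        if_neg (fun h => hC ⟨h.1, h.2.1, h.2.2.1, h.2.2.2.1, h.2.2.2.2.1⟩),
        if_neg (fun h => hC ⟨h.1, h.2.1, h.2.2.1, h.2.2.2.1, h.2.2.2.2.1⟩)]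
      ring
  unfold coeffG
  rw [finsum_congr hstep1]
  rw [finsum_congr (fun p => (by ring :
    Qp w a 1 1 p + Qp w a (-1) (-1) p - Qp w a 1 (-1) p - Qp w a (-1) 1 p
      = (Qp w a 1 1 p + Qp w a (-1) (-1) p) - (Qp w a 1 (-1) p + Qp w a (-1) 1 p)))]
  rw [finsum_sub_distrib
      (by
        apply Set.Finite.subset ((Qp_support w a 1 1).union (Qp_support w a (-1) (-1)))
        intro p hp
        rw [Function.mem_support] at hp
        by_contra hn
        simp only [Set.mem_union, Function.mem_support, not_or, not_not] at hn
        rw [hn.1, hn.2] at hp; simp at hp)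
      (by
        apply Set.Finite.subset ((Qp_support w a 1 (-1)).union (Qp_support w a (-1) 1))
        intro p hp
        rw [Function.mem_support] at hp
        by_contra hn
        simp only [Set.mem_union, Function.mem_support, not_or, not_not] at hn
        rw [hn.1, hn.2] at hp; simp at hp),
    finsum_add_distrib (Qp_support w a 1 1) (Qp_support w a (-1) (-1)),
    finsum_add_distrib (Qp_support w a 1 (-1)) (Qp_support w a (-1) 1)]

  -- step 5: pointwise identification with the `pairSum` summand
  have hstep5 : ∀ M : ℤ,
      Qp w a 1 1 (M, 2*a - M) + Qp w a (-1) (-1) (-M, M - 2*a)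
        - (Qp w a 1 (-1) (M, M - 2*a) + Qp w a (-1) 1 (-M, 2*a - M))
      = psummand (j:ℤ) (j:ℤ) (2*a) (2*n) M := by
    intro M
    unfold Qp psummand
    dsimp only
    have hwodd : ∀ x : ℤ, x - 2*a = -(2*a - x) := fun x => by ring
    rcases lt_trichotomy M 0 with hM | hM | hM <;>
      rcases lt_trichotomy (2*a - M) 0 with hu | hu | hu
    · -- M < 0, 2a-M < 0 : piece (-1,-1) alive
      rw [if_neg (by rintro ⟨c1,c2,c3,c4,c5,c6⟩; omega : ¬(1 ≤ M ∧ Odd M ∧ 1 ≤ 2*a - M ∧ Odd (2*a - M) ∧ 24*w = M^2 + (2*a - M)^2 - 2 ∧ 2*a = 1*M + 1*(2*a - M))), if_neg (by rintro ⟨c1,c2,c3,c4,c5,c6⟩; omega : ¬(1 ≤ M ∧ Odd M ∧ 1 ≤ M - 2*a ∧ Odd (M - 2*a) ∧ 24*w = M^2 + (M - 2*a)^2 - 2 ∧ 2*a = 1*M + -1*(M - 2*a))), if_neg (by rintro ⟨c1,c2,c3,c4,c5,c6⟩; omega : ¬(1 ≤ -M ∧ Odd (-M) ∧ 1 ≤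 2*a - M ∧ Odd (2*a - M) ∧ 24*w = (-M)^2 + (2*a - M)^2 - 2 ∧ 2*a = -1*(-M) + 1*(2*a - M)))]
      rw [show ee M = -trefoilEps M from if_neg (by omega),
          show ee (2*a - M) = -trefoilEps (2*a - M) from if_neg (by omega)]
      rw [show trefoilEps (-M) = trefoilEps M from trefoilEps_neg M,
          show trefoilEps (M - 2*a) = trefoilEps (2*a - M) from by
            rw [hwodd M, trefoilEps_neg]]
      by_cases hch : 12*(2*n) = M^2 + (2*a - M)^2 - 2 + 12*((j:ℤ)*M + (j:ℤ)*(2*a - M))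
      · rw [if_pos hch]
        have h24 : 24*w = (-M)^2 + (M - 2*a)^2 - 2 := by
          rw [hw]; linear_combination hch
        by_cases hoM : Odd M
        · by_cases hou : Odd (2*a - M)
          · rw [if_pos ⟨by omega, (by rw [odd_neg]; exact hoM), by omega,
              (by rw [hwodd M, odd_neg]; exact hou), h24, by ring⟩]
            ring
          · rw [if_neg (fun h => hou (by have := h.2.2.2.1; rwa [hwodd M, odd_neg] at this)),
              trefoilEps_even (2*a - M) (by rw [Int.odd_iff] at hou; omega)]
            ring
        · rw [if_neg (fun h => hoM (by have := h.2.1; rwa [odd_neg] at this)),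
            trefoilEps_even M (by rw [Int.odd_iff] at hoM; omega)]
          ring
      · rw [if_neg hch, if_neg (fun h => hch (by
          have h5 := h.2.2.2.2.1; rw [hw] at h5; linear_combination h5))]
        ring
    · -- M < 0, 2a-M = 0
      rw [if_neg (by rintro ⟨c1,c2,c3,c4,c5,c6⟩; omega : ¬(1 ≤ M ∧ Odd M ∧ 1 ≤ 2*a - M ∧ Odd (2*a - M) ∧ 24*w = M^2 + (2*a - M)^2 - 2 ∧ 2*a = 1*M + 1*(2*a - M))), if_neg (by rintro ⟨c1,c2,c3,c4,c5,c6⟩; omega : ¬(1 ≤ -M ∧ Odd (-M) ∧ 1 ≤ M - 2*a ∧ Odd (M - 2*a) ∧ 24*w = (-M)^2 + (M - 2*a)^2 - 2 ∧ 2*a = -1*(-M) + -1*(M - 2*a))), if_neg (by rintro ⟨c1,c2,c3,c4,c5,c6⟩; omega : ¬(1 ≤ M ∧ Odd M ∧ 1 ≤ M - 2*a ∧ Odd (M - 2*a) ∧ 24*w = M^2 + (M - 2*a)^2 - 2 ∧ 2*a = 1*M + -1*(M - 2*a))), if_neg (by rintro ⟨c1,c2,c3,c4,c5,c6⟩; omega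 : ¬(1 ≤ -M ∧ Odd (-M) ∧ 1 ≤ 2*a - M ∧ Odd (2*a - M) ∧ 24*w = (-M)^2 + (2*a - M)^2 - 2 ∧ 2*a = -1*(-M) + 1*(2*a - M)))]
      rw []
      rw [ee_even (2*a - M) (by omega)]
      ring
    · -- M < 0, 2a-M > 0 : piece (-1,1) alive
      rw [if_neg (by rintro ⟨c1,c2,c3,c4,c5,c6⟩; omega : ¬(1 ≤ M ∧ Odd M ∧ 1 ≤ 2*a - M ∧ Odd (2*a - M) ∧ 24*w = M^2 + (2*a - M)^2 - 2 ∧ 2*a = 1*M + 1*(2*a - M))), if_neg (by rintro ⟨c1,c2,c3,c4,c5,c6⟩; omega : ¬(1 ≤ -M ∧ Odd (-M) ∧ 1 ≤ M - 2*a ∧ Odd (M - 2*a) ∧ 24*w = (-M)^2 + (M - 2*a)^2 - 2 ∧ 2*a = -1*(-M) + -1*(M - 2*a))), if_neg (by rintro ⟨c1,c2,c3,c4,c5,c6⟩; omega : ¬(1 ≤ M ∧ Odd M ∧ 1 ≤ M - 2*a ∧ Odd (M - 2*a) ∧ 24*w = M^2 + (M - 2*a)^2 - 2 ∧ 2*a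 = 1*M + -1*(M - 2*a)))]
      rw [show ee M = -trefoilEps M from if_neg (by omega),
          show ee (2*a - M) = trefoilEps (2*a - M) from if_pos (by omega)]
      rw [show trefoilEps (-M) = trefoilEps M from trefoilEps_neg M]
      by_cases hch : 12*(2*n) = M^2 + (2*a - M)^2 - 2 + 12*((j:ℤ)*M + (j:ℤ)*(2*a - M))
      · rw [if_pos hch]
        have h24 : 24*w = (-M)^2 + (2*a - M)^2 - 2 := by
          rw [hw]; linear_combination hch
        by_cases hoM : Odd M
        · by_cases hou : Odd (2*a - M)
          · rw [if_pos ⟨by omega, (by rw [odd_neg]; exact hoM), by omega, hou, h24, by ring⟩]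
            ring
          · rw [if_neg (fun h => hou h.2.2.2.1),
              trefoilEps_even (2*a - M) (by rw [Int.odd_iff] at hou; omega)]
            ring
        · rw [if_neg (fun h => hoM (by have := h.2.1; rwa [odd_neg] at this)),
            trefoilEps_even M (by rw [Int.odd_iff] at hoM; omega)]
          ring
      · rw [if_neg hch, if_neg (fun h => hch (by
          have h5 := h.2.2.2.2.1; rw [hw] at h5; linear_combination h5))]
        ring
    · -- M = 0
      rw [if_neg (by rintro ⟨c1,c2,c3,c4,c5,c6⟩; omega : ¬(1 ≤ M ∧ Odd M ∧ 1 ≤ 2*a - M ∧ Odd (2*a - M) ∧ 24*w = M^2 + (2*a - M)^2 - 2 ∧ 2*a = 1*M + 1*(2*a - M))), if_neg (by rintro ⟨c1,c2,c3,c4,c5,c6⟩; omega : ¬(1 ≤ -M ∧ Odd (-M) ∧ 1 ≤ M - 2*a ∧ Odd (M - 2*a) ∧ 24*w = (-M)^2 + (M - 2*a)^2 - 2 ∧ 2*a = -1*(-M) + -1*(M - 2*a))), if_neg (by rintro ⟨c1,c2,c3,c4,c5,c6⟩; omega : ¬(1 ≤ M ∧ Odd M ∧ 1 ≤ M - 2*a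 ∧ Odd (M - 2*a) ∧ 24*w = M^2 + (M - 2*a)^2 - 2 ∧ 2*a = 1*M + -1*(M - 2*a))), if_neg (by rintro ⟨c1,c2,c3,c4,c5,c6⟩; omega : ¬(1 ≤ -M ∧ Odd (-M) ∧ 1 ≤ 2*a - M ∧ Odd (2*a - M) ∧ 24*w = (-M)^2 + (2*a - M)^2 - 2 ∧ 2*a = -1*(-M) + 1*(2*a - M)))]
      rw []
      rw [ee_even M (by omega)]
      ring
    · -- M = 0
      rw [if_neg (by rintro ⟨c1,c2,c3,c4,c5,c6⟩; omega : ¬(1 ≤ M ∧ Odd M ∧ 1 ≤ 2*a - M ∧ Odd (2*a - M) ∧ 24*w = M^2 + (2*a - M)^2 - 2 ∧ 2*a = 1*M + 1*(2*a - M))), if_neg (by rintro ⟨c1,c2,c3,c4,c5,c6⟩; omega : ¬(1 ≤ -M ∧ Odd (-M) ∧ 1 ≤ M - 2*a ∧ Odd (M - 2*a) ∧ 24*w = (-M)^2 + (M - 2*a)^2 - 2 ∧ 2*a = -1*(-M) + -1*(M - 2*a))), if_neg (by rintro ⟨c1,c2,c3,c4,c5,c6⟩; omega : ¬(1 ≤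 M ∧ Odd M ∧ 1 ≤ M - 2*a ∧ Odd (M - 2*a) ∧ 24*w = M^2 + (M - 2*a)^2 - 2 ∧ 2*a = 1*M + -1*(M - 2*a))), if_neg (by rintro ⟨c1,c2,c3,c4,c5,c6⟩; omega : ¬(1 ≤ -M ∧ Odd (-M) ∧ 1 ≤ 2*a - M ∧ Odd (2*a - M) ∧ 24*w = (-M)^2 + (2*a - M)^2 - 2 ∧ 2*a = -1*(-M) + 1*(2*a - M)))]
      rw []
      rw [ee_even M (by omega)]
      ring
    · -- M = 0
      rw [if_neg (by rintro ⟨c1,c2,c3,c4,c5,c6⟩; omega : ¬(1 ≤ M ∧ Odd M ∧ 1 ≤ 2*a - M ∧ Odd (2*a - M) ∧ 24*w = M^2 + (2*a - M)^2 - 2 ∧ 2*a = 1*M + 1*(2*a - M))), if_neg (by rintro ⟨c1,c2,c3,c4,c5,c6⟩; omega : ¬(1 ≤ -M ∧ Odd (-M) ∧ 1 ≤ M - 2*a ∧ Odd (M - 2*a) ∧ 24*w = (-M)^2 + (M - 2*a)^2 - 2 ∧ 2*a = -1*(-M) + -1*(M - 2*a))), if_neg (by rintro ⟨c1,c2,c3,c4,c5,c6⟩;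 omega : ¬(1 ≤ M ∧ Odd M ∧ 1 ≤ M - 2*a ∧ Odd (M - 2*a) ∧ 24*w = M^2 + (M - 2*a)^2 - 2 ∧ 2*a = 1*M + -1*(M - 2*a))), if_neg (by rintro ⟨c1,c2,c3,c4,c5,c6⟩; omega : ¬(1 ≤ -M ∧ Odd (-M) ∧ 1 ≤ 2*a - M ∧ Odd (2*a - M) ∧ 24*w = (-M)^2 + (2*a - M)^2 - 2 ∧ 2*a = -1*(-M) + 1*(2*a - M)))]
      rw []
      rw [ee_even M (by omega)]
      ring
    · -- M > 0, 2a-M < 0 : piece (1,-1) alive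
      rw [if_neg (by rintro ⟨c1,c2,c3,c4,c5,c6⟩; omega : ¬(1 ≤ M ∧ Odd M ∧ 1 ≤ 2*a - M ∧ Odd (2*a - M) ∧ 24*w = M^2 + (2*a - M)^2 - 2 ∧ 2*a = 1*M + 1*(2*a - M))), if_neg (by rintro ⟨c1,c2,c3,c4,c5,c6⟩; omega : ¬(1 ≤ -M ∧ Odd (-M) ∧ 1 ≤ M - 2*a ∧ Odd (M - 2*a) ∧ 24*w = (-M)^2 + (M - 2*a)^2 - 2 ∧ 2*a = -1*(-M) + -1*(M - 2*a))), if_neg (by rintro ⟨c1,c2,c3,c4,c5,c6⟩; omega : ¬(1 ≤ -M ∧ Odd (-M) ∧ 1 ≤ 2*a - M ∧ Odd (2*a - M) ∧ 24*w = (-M)^2 + (2*a - M)^2 - 2 ∧ 2*a = -1*(-M) + 1*(2*a - M)))]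
      rw [show ee M = trefoilEps M from if_pos (by omega),
          show ee (2*a - M) = -trefoilEps (2*a - M) from if_neg (by omega)]
      rw [show trefoilEps (M - 2*a) = trefoilEps (2*a - M) from by
            rw [hwodd M, trefoilEps_neg]]
      by_cases hch : 12*(2*n) = M^2 + (2*a - M)^2 - 2 + 12*((j:ℤ)*M + (j:ℤ)*(2*a - M))
      · rw [if_pos hch]
        have h24 : 24*w = M^2 + (M - 2*a)^2 - 2 := by
          rw [hw]; linear_combination hch
        by_cases hoM : Odd M
        · by_cases hou : Odd (2*a - M)
          · rw [if_pos ⟨by omega, hoM, by omega,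
              (by rw [hwodd M, odd_neg]; exact hou), h24, by ring⟩]
            ring
          · rw [if_neg (fun h => hou (by have := h.2.2.2.1; rwa [hwodd M, odd_neg] at this)),
              trefoilEps_even (2*a - M) (by rw [Int.odd_iff] at hou; omega)]
            ring
        · rw [if_neg (fun h => hoM h.2.1),
            trefoilEps_even M (by rw [Int.odd_iff] at hoM; omega)]
          ring
      · rw [if_neg hch, if_neg (fun h => hch (by
          have h5 := h.2.2.2.2.1; rw [hw] at h5; linear_combination h5))]
        ring
    · -- M > 0, 2a-M = 0
      rw [if_neg (by rintro ⟨c1,c2,c3,c4,c5,c6⟩; omega : ¬(1 ≤ M ∧ Odd M ∧ 1 ≤ 2*a - M ∧ Odd (2*a - M) ∧ 24*w = M^2 + (2*a - M)^2 - 2 ∧ 2*a = 1*M + 1*(2*a - M))), if_neg (by rintro ⟨c1,c2,c3,c4,c5,c6⟩; omega : ¬(1 ≤ -M ∧ Odd (-M) ∧ 1 ≤ M - 2*a ∧ Odd (M - 2*a) ∧ 24*w = (-M)^2 + (M - 2*a)^2 - 2 ∧ 2*a = -1*(-M) + -1*(M - 2*a))), if_neg (by rintro ⟨c1,c2,c3,c4,c5,c6⟩;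 omega : ¬(1 ≤ M ∧ Odd M ∧ 1 ≤ M - 2*a ∧ Odd (M - 2*a) ∧ 24*w = M^2 + (M - 2*a)^2 - 2 ∧ 2*a = 1*M + -1*(M - 2*a))), if_neg (by rintro ⟨c1,c2,c3,c4,c5,c6⟩; omega : ¬(1 ≤ -M ∧ Odd (-M) ∧ 1 ≤ 2*a - M ∧ Odd (2*a - M) ∧ 24*w = (-M)^2 + (2*a - M)^2 - 2 ∧ 2*a = -1*(-M) + 1*(2*a - M)))]
      rw []
      rw [ee_even (2*a - M) (by omega)]
      ring
    · -- M > 0, 2a-M > 0 : piece (1,1) alive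
      rw [if_neg (by rintro ⟨c1,c2,c3,c4,c5,c6⟩; omega : ¬(1 ≤ -M ∧ Odd (-M) ∧ 1 ≤ M - 2*a ∧ Odd (M - 2*a) ∧ 24*w = (-M)^2 + (M - 2*a)^2 - 2 ∧ 2*a = -1*(-M) + -1*(M - 2*a))), if_neg (by rintro ⟨c1,c2,c3,c4,c5,c6⟩; omega : ¬(1 ≤ M ∧ Odd M ∧ 1 ≤ M - 2*a ∧ Odd (M - 2*a) ∧ 24*w = M^2 + (M - 2*a)^2 - 2 ∧ 2*a = 1*M + -1*(M - 2*a))), if_neg (by rintro ⟨c1,c2,c3,c4,c5,c6⟩; omega : ¬(1 ≤ -M ∧ Odd (-M) ∧ 1 ≤ 2*a - M ∧ Odd (2*a - M) ∧ 24*w = (-M)^2 + (2*a - M)^2 - 2 ∧ 2*a = -1*(-M) + 1*(2*a - M)))]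
      rw [show ee M = trefoilEps M from if_pos (by omega),
          show ee (2*a - M) = trefoilEps (2*a - M) from if_pos (by omega)]
      by_cases hch : 12*(2*n) = M^2 + (2*a - M)^2 - 2 + 12*((j:ℤ)*M + (j:ℤ)*(2*a - M))
      · rw [if_pos hch]
        have h24 : 24*w = M^2 + (2*a - M)^2 - 2 := by
          rw [hw]; linear_combination hch
        by_cases hoM : Odd M
        · by_cases hou : Odd (2*a - M)
          · rw [if_pos ⟨by omega, hoM, by omega, hou, h24, by ring⟩]
            ring
          · rw [if_neg (fun h => hou h.2.2.2.1),
              trefoilEps_even (2*a - M) (by rw [Int.odd_iff] at hou; omega)]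
            ring
        · rw [if_neg (fun h => hoM h.2.1),
            trefoilEps_even M (by rw [Int.odd_iff] at hoM; omega)]
          ring
      · rw [if_neg hch, if_neg (fun h => hch (by
          have h5 := h.2.2.2.2.1; rw [hw] at h5; linear_combination h5))]
        ring

  -- step 4: reindex the four pieces and recombine
  have hinj1 : Function.Injective (fun M : ℤ => ((M, 2*a - M) : ℤ × ℤ)) :=
    fun x y h => by simpa using congrArg Prod.fst h
  have hinj2 : Function.Injective (fun M : ℤ => ((-M, M - 2*a) : ℤ × ℤ)) :=
    fun x y h => by simpa using congrArg Prod.fst h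
  have hinj3 : Function.Injective (fun M : ℤ => ((M, M - 2*a) : ℤ × ℤ)) :=
    fun x y h => by simpa using congrArg Prod.fst h
  have hinj4 : Function.Injective (fun M : ℤ => ((-M, 2*a - M) : ℤ × ℤ)) :=
    fun x y h => by simpa using congrArg Prod.fst h
  rw [Qp_reindex w a 1 1 _ hinj1 (fun p hp => by
      obtain ⟨-,-,-,-,-,h6⟩ := Qp_cond_of_ne w a 1 1 p hp
      exact ⟨p.1, by ext <;> dsimp only <;> omega⟩),
    Qp_reindex w a (-1) (-1) _ hinj2 (fun p hp => by
      obtain ⟨-,-,-,-,-,h6⟩ := Qp_cond_of_ne w a (-1) (-1) p hp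
      exact ⟨-p.1, by ext <;> dsimp only <;> omega⟩),
    Qp_reindex w a 1 (-1) _ hinj3 (fun p hp => by
      obtain ⟨-,-,-,-,-,h6⟩ := Qp_cond_of_ne w a 1 (-1) p hp
      exact ⟨p.1, by ext <;> dsimp only <;> omega⟩),
    Qp_reindex w a (-1) 1 _ hinj4 (fun p hp => by
      obtain ⟨-,-,-,-,-,h6⟩ := Qp_cond_of_ne w a (-1) 1 p hp
      exact ⟨-p.1, by ext <;> dsimp only <;> omega⟩)]
  rw [← finsum_add_distrib (Qp_comp_support w a 1 1 _ hinj1) (Qp_comp_support w a (-1) (-1) _ hinj2),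
    ← finsum_add_distrib (Qp_comp_support w a 1 (-1) _ hinj3) (Qp_comp_support w a (-1) 1 _ hinj4),
    ← finsum_sub_distrib
      (by apply Set.Finite.subset ((Qp_comp_support w a 1 1 _ hinj1).union (Qp_comp_support w a (-1) (-1) _ hinj2))
          intro M hMs
          rw [Function.mem_support] at hMs
          by_contra hn
          simp only [Set.mem_union, Function.mem_support, not_or, not_not] at hn
          rw [hn.1, hn.2] at hMs; simp at hMs)
      (by apply Set.Finite.subset ((Qp_comp_support w a 1 (-1) _ hinj3).union (Qp_comp_support w a (-1) 1 _ hinj4))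
          intro M hMs
          rw [Function.mem_support] at hMs
          by_contra hn
          simp only [Set.mem_union, Function.mem_support, not_or, not_not] at hn
          rw [hn.1, hn.2] at hMs; simp at hMs)]
  unfold pairSum
  exact finsum_congr hstep5


/-- Squared-relation step `G_0 → G_1`. -/
lemma RelG0 (a n d1 d2 d3 : ℤ)
    (h1 : d1 = (if a = 1 ∧ n = 0 then (1:ℤ) else 0))
    (h2 : d2 = (if a = 3 ∧ n = 1 then (1:ℤ) else 0))
    (h3 : d3 = (if a = 5 ∧ n = 2 then (1:ℤ) else 0)) :
    coeffG 0 a n = coeffG 1 (a-6) (n-3) + 4*Fc 1 (2*a-7) (2*n-3) - 4*Fc 1 (2*a-11) (2*n-5)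
      + 4*d1 - 8*d2 + 4*d3 := by
  have hA0 := coeffG_eq_pairSum 0 a n
  have hA1 := coeffG_eq_pairSum 1 (a-6) (n-3)
  have hs1 := pairSum_step1 0 0 (2*a) (2*n)
  have hs2 := pairSum_step2 1 0 (2*a-6) (2*n-3)
  have hf1 := FcStep 0 (2*a-1) (2*n) d1 d2
    (by rw [h1]; exact if_congr (by omega) rfl rfl)
    (by rw [h2]; exact if_congr (by omega) rfl rfl)
  have hf2 := FcStep 0 (2*a-5) (2*n-2) d2 d3
    (by rw [h2]; exact if_congr (by omega) rfl rfl)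
    (by rw [h3]; exact if_congr (by omega) rfl rfl)
  push_cast at hA0 hA1
  ring_nf at hA0 hA1 hs1 hs2 hf1 hf2 ⊢
  linarith [hA0, hA1, hs1, hs2, hf1, hf2]

/-- Squared-relation step `G_1 → G_2`. -/
lemma RelG1 (a n d1 d2 d3 : ℤ)
    (h1 : d1 = (if a = 1 ∧ n = 1 then (1:ℤ) else 0))
    (h2 : d2 = (if a = 3 ∧ n = 4 then (1:ℤ) else 0))
    (h3 : d3 = (if a = 5 ∧ n = 7 then (1:ℤ) else 0)) :
    coeffG 1 a n = coeffG 2 (a-6) (n-9) + 4*Fc 2 (2*a-7) (2*n-10) - 4*Fc 2 (2*a-11) (2*n-16)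
      + 4*d1 - 8*d2 + 4*d3 := by
  have hA0 := coeffG_eq_pairSum 1 a n
  have hA1 := coeffG_eq_pairSum 2 (a-6) (n-9)
  have hs1 := pairSum_step1 1 1 (2*a) (2*n)
  have hs2 := pairSum_step2 2 1 (2*a-6) (2*n-9)
  have hf1 := FcStep 1 (2*a-1) (2*n-1) d1 d2
    (by rw [h1]; exact if_congr (by omega) rfl rfl)
    (by rw [h2]; exact if_congr (by omega) rfl rfl)
  have hf2 := FcStep 1 (2*a-5) (2*n-7) d2 d3
    (by rw [h2]; exact if_congr (by omega) rfl rfl)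
    (by rw [h3]; exact if_congr (by omega) rfl rfl)
  push_cast at hA0 hA1
  ring_nf at hA0 hA1 hs1 hs2 hf1 hf2 ⊢
  linarith [hA0, hA1, hs1, hs2, hf1, hf2]

/-- Squared-relation step `G_2 → G_3`. -/
lemma RelG2 (a n d1 d2 d3 : ℤ)
    (h1 : d1 = (if a = 1 ∧ n = 2 then (1:ℤ) else 0))
    (h2 : d2 = (if a = 3 ∧ n = 7 then (1:ℤ) else 0))
    (h3 : d3 = (if a = 5 ∧ n = 12 then (1:ℤ) else 0)) :
    coeffG 2 a n = coeffG 3 (a-6) (n-15) + 4*Fc 3 (2*a-7) (2*n-17) - 4*Fc 3 (2*a-11) (2*n-27)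
      + 4*d1 - 8*d2 + 4*d3 := by
  have hA0 := coeffG_eq_pairSum 2 a n
  have hA1 := coeffG_eq_pairSum 3 (a-6) (n-15)
  have hs1 := pairSum_step1 2 2 (2*a) (2*n)
  have hs2 := pairSum_step2 3 2 (2*a-6) (2*n-15)
  have hf1 := FcStep 2 (2*a-1) (2*n-2) d1 d2
    (by rw [h1]; exact if_congr (by omega) rfl rfl)
    (by rw [h2]; exact if_congr (by omega) rfl rfl)
  have hf2 := FcStep 2 (2*a-5) (2*n-12) d2 d3
    (by rw [h2]; exact if_congr (by omega) rfl rfl)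
    (by rw [h3]; exact if_congr (by omega) rfl rfl)
  push_cast at hA0 hA1
  ring_nf at hA0 hA1 hs1 hs2 hf1 hf2 ⊢
  linarith [hA0, hA1, hs1, hs2, hf1, hf2]

-- ===== expansion of the polynomial recursion data =====

lemma sumI_add (j : ℕ) (x n : ℤ) (p q : Polynomial ℤ) :
    (p + q).sum (fun β d => d * coeffG j x (n - (β:ℤ)))
      = p.sum (fun β d => d * coeffG j x (n - (β:ℤ)))
        + q.sum (fun β d => d * coeffG j x (n - (β:ℤ))) :=
  Polynomial.sum_add_index p q _ (fun _ => zero_mul _) (fun _ c d => add_mul c d _)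

lemma sumI_monomial (j : ℕ) (x n : ℤ) (b : ℕ) (c : ℤ) :
    (Polynomial.monomial b c).sum (fun β d => d * coeffG j x (n - (β:ℤ)))
      = c * coeffG j x (n - (b:ℤ)) :=
  Polynomial.sum_monomial_index c _ (zero_mul _)

lemma sumH_add (j : ℕ) (a n : ℤ) (p q : Polynomial (Polynomial ℤ)) :
    (p + q).sum (fun α c => c.sum fun β d => d * coeffG j (a - (α:ℤ)) (n - (β:ℤ)))
      = p.sum (fun α c => c.sum fun β d => d * coeffG j (a - (α:ℤ)) (n - (β:ℤ)))
        + q.sum (fun α c => c.sum fun β d => d * coeffG j (a - (α:ℤ)) (n - (β:ℤ))) :=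
  Polynomial.sum_add_index p q _ (fun _ => Polynomial.sum_zero_index _)
    (fun _ b1 b2 => Polynomial.sum_add_index b1 b2 _ (fun _ => zero_mul _)
      (fun _ c d => add_mul c d _))

lemma sumH_monomial (j : ℕ) (a n : ℤ) (k : ℕ) (p : Polynomial ℤ) :
    (Polynomial.monomial k p).sum
        (fun α c => c.sum fun β d => d * coeffG j (a - (α:ℤ)) (n - (β:ℤ)))
      = p.sum (fun β d => d * coeffG j (a - (k:ℤ)) (n - (β:ℤ))) :=
  Polynomial.sum_monomial_index p _ (Polynomial.sum_zero_index _)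

lemma R0decomp : trefoilR0 = (Polynomial.monomial 0 (Polynomial.monomial 1 (-1))) + (Polynomial.monomial 2 (Polynomial.monomial 4 (1) + Polynomial.monomial 6 (1))) + (Polynomial.monomial 3 (Polynomial.monomial 6 (1))) + (Polynomial.monomial 4 (Polynomial.monomial 9 (-1))) + (Polynomial.monomial 5 (Polynomial.monomial 11 (-2))) + (Polynomial.monomial 7 (Polynomial.monomial 16 (1))) := by
  unfold trefoilR0 Cq Qv Xv
  simp only [← Polynomial.C_mul_X_pow_eq_monomial]
  simp only [map_add, map_sub, map_neg, map_mul, map_pow, map_ofNat, map_one,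
    Polynomial.C_1]
  ring

lemma SS0 (a n : ℤ) :
    (∑ α ∈ (trefoilR0).support, ∑ β ∈ ((trefoilR0).coeff α).support,
        ((trefoilR0).coeff α).coeff β * coeffG 0 (a - (α : ℤ)) (n - (β : ℤ)))
    = (-1) * coeffG 0 (a) (n - 1) + (1) * coeffG 0 (a - 2) (n - 4) + (1) * coeffG 0 (a - 2) (n - 6) + (1) * coeffG 0 (a - 3) (n - 6) + (-1) * coeffG 0 (a - 4) (n - 9) + (-2) * coeffG 0 (a - 5) (n - 11) + (1) * coeffG 0 (a - 7) (n - 16) := by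
  show (trefoilR0).sum (fun α c => c.sum fun β d =>
      d * coeffG 0 (a - (α:ℤ)) (n - (β:ℤ))) = _
  rw [R0decomp]
  simp only [sumH_add, sumH_monomial, sumI_add, sumI_monomial]
  push_cast
  ring_nf

lemma R1decomp : trefoilR1 = (Polynomial.monomial 0 (Polynomial.monomial 0 (1))) + (Polynomial.monomial 2 (Polynomial.monomial 1 (-2) + Polynomial.monomial 3 (1) + Polynomial.monomial 5 (-1))) + (Polynomial.monomial 3 (Polynomial.monomial 2 (-2))) + (Polynomial.monomial 4 (Polynomial.monomial 2 (1) + Polynomial.monomial 4 (-2) + Polynomial.monomial 6 (3) + Polynomial.monomial 8 (-1))) + (Polynomial.monomial 5 (Polynomial.monomial 3 (2) + Polynomial.monomial 7 (2))) + (Polynomial.monomial 6 (Polynomial.monomial 4 (1) + Polynomial.monomial 5 (1) + Polynomial.monomial 7 (-2) + Polynomial.monomial 9 (3) + Polynomial.monomial 11 (-1))) + (Polynomial.monomial 7 (Polynomial.monomial 8 (-2))) + (Polynomial.monomial 8 (Polynomial.monomial 7 (-1) + Polynomial.monomial 9 (-1) + Polynomial.monomial 10 (-2) + Polynomial.monomial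 12 (1) + Polynomial.monomial 14 (-1))) + (Polynomial.monomial 9 (Polynomial.monomial 9 (-1))) + (Polynomial.monomial 10 (Polynomial.monomial 12 (1) + Polynomial.monomial 15 (1))) + (Polynomial.monomial 11 (Polynomial.monomial 14 (2))) + (Polynomial.monomial 13 (Polynomial.monomial 19 (-1))) := by
  unfold trefoilR1 Cq Qv Xv
  simp only [← Polynomial.C_mul_X_pow_eq_monomial]
  simp only [map_add, map_sub, map_neg, map_mul, map_pow, map_ofNat, map_one,
    Polynomial.C_1]
  ring

lemma SS1 (a n : ℤ) :
    (∑ α ∈ (trefoilR1).support, ∑ β ∈ ((trefoilR1).coeff α).support,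
        ((trefoilR1).coeff α).coeff β * coeffG 1 (a - (α : ℤ)) (n - (β : ℤ)))
    = (1) * coeffG 1 (a) (n) + (-2) * coeffG 1 (a - 2) (n - 1) + (1) * coeffG 1 (a - 2) (n - 3) + (-1) * coeffG 1 (a - 2) (n - 5) + (-2) * coeffG 1 (a - 3) (n - 2) + (1) * coeffG 1 (a - 4) (n - 2) + (-2) * coeffG 1 (a - 4) (n - 4) + (3) * coeffG 1 (a - 4) (n - 6) + (-1) * coeffG 1 (a - 4) (n - 8) + (2) * coeffG 1 (a - 5) (n - 3) + (2) * coeffG 1 (a - 5) (n - 7) + (1) * coeffG 1 (a - 6) (n - 4) + (1) * coeffG 1 (a - 6) (n - 5) + (-2) * coeffG 1 (a - 6) (n - 7) + (3) * coeffG 1 (a - 6) (n - 9) + (-1) * coeffG 1 (a - 6) (n - 11) + (-2) * coeffG 1 (a - 7) (n - 8) + (-1) * coeffG 1 (a - 8) (n - 7) + (-1) * coeffG 1 (a - 8) (n - 9) + (-2) * coeffG 1 (a - 8) (n - 10) + (1) * coeffG 1 (a - 8) (n - 12) + (-1) * coeffG 1 (a - 8) (n - 14) + (-1) * coeffG 1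 (a - 9) (n - 9) + (1) * coeffG 1 (a - 10) (n - 12) + (1) * coeffG 1 (a - 10) (n - 15) + (2) * coeffG 1 (a - 11) (n - 14) + (-1) * coeffG 1 (a - 13) (n - 19) := by
  show (trefoilR1).sum (fun α c => c.sum fun β d =>
      d * coeffG 1 (a - (α:ℤ)) (n - (β:ℤ))) = _
  rw [R1decomp]
  simp only [sumH_add, sumH_monomial, sumI_add, sumI_monomial]
  push_cast
  ring_nf

lemma R2decomp : trefoilR2 = (Polynomial.monomial 3 (Polynomial.monomial 4 (1))) + (Polynomial.monomial 5 (Polynomial.monomial 5 (-2))) + (Polynomial.monomial 6 (Polynomial.monomial 6 (-1) + Polynomial.monomial 9 (-1))) + (Polynomial.monomial 7 (Polynomial.monomial 6 (1))) + (Polynomial.monomial 8 (Polynomial.monomial 7 (1) + Polynomial.monomial 9 (1) + Polynomial.monomial 10 (2) + Polynomial.monomial 12 (-1) + Polynomial.monomial 14 (1))) + (Polynomial.monomial 9 (Polynomial.monomial 11 (2))) + (Polynomial.monomial 10 (Polynomial.monomial 10 (-1) + Polynomial.monomial 11 (-1) + Polynomial.monomial 13 (2) + Polynomial.monomial 15 (-3)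 + Polynomial.monomial 17 (1))) + (Polynomial.monomial 11 (Polynomial.monomial 12 (-2) + Polynomial.monomial 16 (-2))) + (Polynomial.monomial 12 (Polynomial.monomial 14 (-1) + Polynomial.monomial 16 (2) + Polynomial.monomial 18 (-3) + Polynomial.monomial 20 (1))) + (Polynomial.monomial 13 (Polynomial.monomial 17 (2))) + (Polynomial.monomial 14 (Polynomial.monomial 19 (2) + Polynomial.monomial 21 (-1) + Polynomial.monomial 23 (1))) + (Polynomial.monomial 16 (Polynomial.monomial 24 (-1))) := by
  unfold trefoilR2 Cq Qv Xv
  simp only [← Polynomial.C_mul_X_pow_eq_monomial]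
  simp only [map_add, map_sub, map_neg, map_mul, map_pow, map_ofNat, map_one,
    Polynomial.C_1]
  ring

lemma SS2 (a n : ℤ) :
    (∑ α ∈ (trefoilR2).support, ∑ β ∈ ((trefoilR2).coeff α).support,
        ((trefoilR2).coeff α).coeff β * coeffG 2 (a - (α : ℤ)) (n - (β : ℤ)))
    = (1) * coeffG 2 (a - 3) (n - 4) + (-2) * coeffG 2 (a - 5) (n - 5) + (-1) * coeffG 2 (a - 6) (n - 6) + (-1) * coeffG 2 (a - 6) (n - 9) + (1) * coeffG 2 (a - 7) (n - 6) + (1) * coeffG 2 (a - 8) (n - 7) + (1) * coeffG 2 (a - 8) (n - 9) + (2) * coeffG 2 (a - 8) (n - 10) + (-1) * coeffG 2 (a - 8) (n - 12) + (1) * coeffG 2 (a - 8) (n - 14) + (2) * coeffG 2 (a - 9) (n - 11) + (-1) * coeffG 2 (a - 10) (n - 10) + (-1) * coeffG 2 (a - 10) (n - 11) + (2) * coeffG 2 (a - 10) (n - 13) + (-3) * coeffG 2 (a - 10) (n - 15) + (1) * coeffG 2 (a - 10) (n - 17) + (-2) * coeffG 2 (a - 11) (n - 12) + (-2) * coeffG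 2 (a - 11) (n - 16) + (-1) * coeffG 2 (a - 12) (n - 14) + (2) * coeffG 2 (a - 12) (n - 16) + (-3) * coeffG 2 (a - 12) (n - 18) + (1) * coeffG 2 (a - 12) (n - 20) + (2) * coeffG 2 (a - 13) (n - 17) + (2) * coeffG 2 (a - 14) (n - 19) + (-1) * coeffG 2 (a - 14) (n - 21) + (1) * coeffG 2 (a - 14) (n - 23) + (-1) * coeffG 2 (a - 16) (n - 24) := by
  show (trefoilR2).sum (fun α c => c.sum fun β d =>
      d * coeffG 2 (a - (α:ℤ)) (n - (β:ℤ))) = _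
  rw [R2decomp]
  simp only [sumH_add, sumH_monomial, sumI_add, sumI_monomial]
  push_cast
  ring_nf

lemma R3decomp : trefoilR3 = (Polynomial.monomial 9 (Polynomial.monomial 19 (-1))) + (Polynomial.monomial 11 (Polynomial.monomial 20 (2))) + (Polynomial.monomial 12 (Polynomial.monomial 21 (1))) + (Polynomial.monomial 13 (Polynomial.monomial 21 (-1))) + (Polynomial.monomial 14 (Polynomial.monomial 22 (-1) + Polynomial.monomial 24 (-1))) + (Polynomial.monomial 16 (Polynomial.monomial 25 (1))) := by
  unfold trefoilR3 Cq Qv Xv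
  simp only [← Polynomial.C_mul_X_pow_eq_monomial]
  simp only [map_add, map_sub, map_neg, map_mul, map_pow, map_ofNat, map_one,
    Polynomial.C_1]
  ring

lemma SS3 (a n : ℤ) :
    (∑ α ∈ (trefoilR3).support, ∑ β ∈ ((trefoilR3).coeff α).support,
        ((trefoilR3).coeff α).coeff β * coeffG 3 (a - (α : ℤ)) (n - (β : ℤ)))
    = (-1) * coeffG 3 (a - 9) (n - 19) + (2) * coeffG 3 (a - 11) (n - 20) + (1) * coeffG 3 (a - 12) (n - 21) + (-1) * coeffG 3 (a - 13) (n - 21) + (-1) * coeffG 3 (a - 14) (n - 22) + (-1) * coeffG 3 (a - 14) (n - 24) + (1) * coeffG 3 (a - 16) (n - 25) := by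
  show (trefoilR3).sum (fun α c => c.sum fun β d =>
      d * coeffG 3 (a - (α:ℤ)) (n - (β:ℤ))) = _
  rw [R3decomp]
  simp only [sumH_add, sumH_monomial, sumI_add, sumI_monomial]
  push_cast
  ring_nf

set_option maxHeartbeats 4000000 in
lemma trefoil_key (a n : ℤ) :
    ((-1) * coeffG 0 (a) (n - 1) + (1) * coeffG 0 (a - 2) (n - 4) + (1) * coeffG 0 (a - 2) (n - 6) + (1) * coeffG 0 (a - 3) (n - 6) + (-1) * coeffG 0 (a - 4) (n - 9) + (-2) * coeffG 0 (a - 5) (n - 11) + (1) * coeffG 0 (a - 7) (n - 16)) + ((1) * coeffG 1 (a) (n) + (-2) * coeffG 1 (a - 2) (n - 1) + (1) * coeffG 1 (a - 2) (n - 3) + (-1) * coeffG 1 (a - 2) (n - 5) + (-2) * coeffG 1 (a - 3) (n - 2) + (1) * coeffG 1 (a - 4) (n - 2) + (-2) * coeffG 1 (a - 4) (n - 4) + (3) * coeffG 1 (a - 4) (n - 6) + (-1) * coeffG 1 (a - 4) (n - 8) + (2) * coeffG 1 (a - 5) (n - 3) + (2) * coeffG 1 (a - 5) (n - 7) + (1)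 * coeffG 1 (a - 6) (n - 4) + (1) * coeffG 1 (a - 6) (n - 5) + (-2) * coeffG 1 (a - 6) (n - 7) + (3) * coeffG 1 (a - 6) (n - 9) + (-1) * coeffG 1 (a - 6) (n - 11) + (-2) * coeffG 1 (a - 7) (n - 8) + (-1) * coeffG 1 (a - 8) (n - 7) + (-1) * coeffG 1 (a - 8) (n - 9) + (-2) * coeffG 1 (a - 8) (n - 10) + (1) * coeffG 1 (a - 8) (n - 12) + (-1) * coeffG 1 (a - 8) (n - 14) + (-1) * coeffG 1 (a - 9) (n - 9) + (1) * coeffG 1 (a - 10) (n - 12) + (1) * coeffG 1 (a - 10) (n - 15) + (2) * coeffG 1 (a - 11) (n - 14) + (-1) * coeffG 1 (a - 13) (n - 19)) + ((1) * coeffG 2 (a - 3) (n - 4) + (-2) * coeffG 2 (a - 5) (n - 5) + (-1) * coeffG 2 (a - 6) (n - 6) + (-1) * coeffG 2 (a - 6) (n - 9) + (1) * coeffG 2 (a - 7) (n - 6) + (1) * coeffG 2 (a - 8) (n - 7) + (1) * coeffG 2 (a - 8) (n - 9) + (2) * coeffG 2 (a - 8) (n - 10) + (-1) * coeffG 2 (a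 - 8) (n - 12) + (1) * coeffG 2 (a - 8) (n - 14) + (2) * coeffG 2 (a - 9) (n - 11) + (-1) * coeffG 2 (a - 10) (n - 10) + (-1) * coeffG 2 (a - 10) (n - 11) + (2) * coeffG 2 (a - 10) (n - 13) + (-3) * coeffG 2 (a - 10) (n - 15) + (1) * coeffG 2 (a - 10) (n - 17) + (-2) * coeffG 2 (a - 11) (n - 12) + (-2) * coeffG 2 (a - 11) (n - 16) + (-1) * coeffG 2 (a - 12) (n - 14) + (2) * coeffG 2 (a - 12) (n - 16) + (-3) * coeffG 2 (a - 12) (n - 18) + (1) * coeffG 2 (a - 12) (n - 20) + (2) * coeffG 2 (a - 13) (n - 17) + (2) * coeffG 2 (a - 14) (n - 19) + (-1) * coeffG 2 (a - 14) (n - 21) + (1) * coeffG 2 (a - 14) (n - 23) + (-1) * coeffG 2 (a - 16) (n - 24)) + ((-1) * coeffG 3 (a - 9) (n - 19) + (2) * coeffG 3 (a - 11) (n - 20) + (1) * coeffG 3 (a - 12) (n - 21) + (-1) * coeffG 3 (a - 13) (n - 21) + (-1) * coeffG 3 (a - 14) (n - 22) + (-1) * coeffG 3 (a - 14) (n - 24)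 + (1) * coeffG 3 (a - 16) (n - 25)) = 0 := by
  have hR0 := RelG0 (a) (n - 1) (if a = 1 ∧ n = 1 then (1:ℤ) else 0) (if a = 3 ∧ n = 2 then (1:ℤ) else 0) (if a = 5 ∧ n = 3 then (1:ℤ) else 0) (by exact if_congr (by omega) rfl rfl) (by exact if_congr (by omega) rfl rfl) (by exact if_congr (by omega) rfl rfl)
  have hR1 := RelG0 (a - 2) (n - 4) (if a = 3 ∧ n = 4 then (1:ℤ) else 0) (if a = 5 ∧ n = 5 then (1:ℤ) else 0) (if a = 7 ∧ n = 6 then (1:ℤ) else 0) (by exact if_congr (by omega) rfl rfl) (by exact if_congr (by omega) rfl rfl) (by exact if_congr (by omega) rfl rfl)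
  have hR2 := RelG0 (a - 2) (n - 6) (if a = 3 ∧ n = 6 then (1:ℤ) else 0) (if a = 5 ∧ n = 7 then (1:ℤ) else 0) (if a = 7 ∧ n = 8 then (1:ℤ) else 0) (by exact if_congr (by omega) rfl rfl) (by exact if_congr (by omega) rfl rfl) (by exact if_congr (by omega) rfl rfl)
  have hR3 := RelG0 (a - 3) (n - 6) (if a = 4 ∧ n = 6 then (1:ℤ) else 0) (if a = 6 ∧ n = 7 then (1:ℤ) else 0) (if a = 8 ∧ n = 8 then (1:ℤ) else 0) (by exact if_congr (by omega) rfl rfl) (by exact if_congr (by omega) rfl rfl) (by exact if_congr (by omega) rfl rfl)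
  have hR4 := RelG0 (a - 4) (n - 9) (if a = 5 ∧ n = 9 then (1:ℤ) else 0) (if a = 7 ∧ n = 10 then (1:ℤ) else 0) (if a = 9 ∧ n = 11 then (1:ℤ) else 0) (by exact if_congr (by omega) rfl rfl) (by exact if_congr (by omega) rfl rfl) (by exact if_congr (by omega) rfl rfl)
  have hR5 := RelG0 (a - 5) (n - 11) (if a = 6 ∧ n = 11 then (1:ℤ) else 0) (if a = 8 ∧ n = 12 then (1:ℤ) else 0) (if a = 10 ∧ n = 13 then (1:ℤ) else 0) (by exact if_congr (by omega) rfl rfl) (by exact if_congr (by omega) rfl rfl) (by exact if_congr (by omega) rfl rfl)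
  have hR6 := RelG0 (a - 7) (n - 16) (if a = 8 ∧ n = 16 then (1:ℤ) else 0) (if a = 10 ∧ n = 17 then (1:ℤ) else 0) (if a = 12 ∧ n = 18 then (1:ℤ) else 0) (by exact if_congr (by omega) rfl rfl) (by exact if_congr (by omega) rfl rfl) (by exact if_congr (by omega) rfl rfl)
  have hR7 := RelG1 (a) (n) (if a = 1 ∧ n = 1 then (1:ℤ) else 0) (if a = 3 ∧ n = 4 then (1:ℤ) else 0) (if a = 5 ∧ n = 7 then (1:ℤ) else 0) (by exact if_congr (by omega) rfl rfl) (by exact if_congr (by omega) rfl rfl) (by exact if_congr (by omega) rfl rfl)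
  have hR8 := RelG1 (a - 2) (n - 1) (if a = 3 ∧ n = 2 then (1:ℤ) else 0) (if a = 5 ∧ n = 5 then (1:ℤ) else 0) (if a = 7 ∧ n = 8 then (1:ℤ) else 0) (by exact if_congr (by omega) rfl rfl) (by exact if_congr (by omega) rfl rfl) (by exact if_congr (by omega) rfl rfl)
  have hR9 := RelG1 (a - 2) (n - 3) (if a = 3 ∧ n = 4 then (1:ℤ) else 0) (if a = 5 ∧ n = 7 then (1:ℤ) else 0) (if a = 7 ∧ n = 10 then (1:ℤ) else 0) (by exact if_congr (by omega) rfl rfl) (by exact if_congr (by omega) rfl rfl) (by exact if_congr (by omega) rfl rfl)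
  have hR10 := RelG1 (a - 2) (n - 5) (if a = 3 ∧ n = 6 then (1:ℤ) else 0) (if a = 5 ∧ n = 9 then (1:ℤ) else 0) (if a = 7 ∧ n = 12 then (1:ℤ) else 0) (by exact if_congr (by omega) rfl rfl) (by exact if_congr (by omega) rfl rfl) (by exact if_congr (by omega) rfl rfl)
  have hR11 := RelG1 (a - 3) (n - 2) (if a = 4 ∧ n = 3 then (1:ℤ) else 0) (if a = 6 ∧ n = 6 then (1:ℤ) else 0) (if a = 8 ∧ n = 9 then (1:ℤ) else 0) (by exact if_congr (by omega) rfl rfl) (by exact if_congr (by omega) rfl rfl) (by exact if_congr (by omega) rfl rfl)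
  have hR12 := RelG1 (a - 4) (n - 2) (if a = 5 ∧ n = 3 then (1:ℤ) else 0) (if a = 7 ∧ n = 6 then (1:ℤ) else 0) (if a = 9 ∧ n = 9 then (1:ℤ) else 0) (by exact if_congr (by omega) rfl rfl) (by exact if_congr (by omega) rfl rfl) (by exact if_congr (by omega) rfl rfl)
  have hR13 := RelG1 (a - 4) (n - 4) (if a = 5 ∧ n = 5 then (1:ℤ) else 0) (if a = 7 ∧ n = 8 then (1:ℤ) else 0) (if a = 9 ∧ n = 11 then (1:ℤ) else 0) (by exact if_congr (by omega) rfl rfl) (by exact if_congr (by omega) rfl rfl) (by exact if_congr (by omega) rfl rfl)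
  have hR14 := RelG1 (a - 4) (n - 6) (if a = 5 ∧ n = 7 then (1:ℤ) else 0) (if a = 7 ∧ n = 10 then (1:ℤ) else 0) (if a = 9 ∧ n = 13 then (1:ℤ) else 0) (by exact if_congr (by omega) rfl rfl) (by exact if_congr (by omega) rfl rfl) (by exact if_congr (by omega) rfl rfl)
  have hR15 := RelG1 (a - 4) (n - 8) (if a = 5 ∧ n = 9 then (1:ℤ) else 0) (if a = 7 ∧ n = 12 then (1:ℤ) else 0) (if a = 9 ∧ n = 15 then (1:ℤ) else 0) (by exact if_congr (by omega) rfl rfl) (by exact if_congr (by omega) rfl rfl) (by exact if_congr (by omega) rfl rfl)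
  have hR16 := RelG1 (a - 5) (n - 3) (if a = 6 ∧ n = 4 then (1:ℤ) else 0) (if a = 8 ∧ n = 7 then (1:ℤ) else 0) (if a = 10 ∧ n = 10 then (1:ℤ) else 0) (by exact if_congr (by omega) rfl rfl) (by exact if_congr (by omega) rfl rfl) (by exact if_congr (by omega) rfl rfl)
  have hR17 := RelG1 (a - 5) (n - 7) (if a = 6 ∧ n = 8 then (1:ℤ) else 0) (if a = 8 ∧ n = 11 then (1:ℤ) else 0) (if a = 10 ∧ n = 14 then (1:ℤ) else 0) (by exact if_congr (by omega) rfl rfl) (by exact if_congr (by omega) rfl rfl) (by exact if_congr (by omega) rfl rfl)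
  have hR18 := RelG1 (a - 6) (n - 5) (if a = 7 ∧ n = 6 then (1:ℤ) else 0) (if a = 9 ∧ n = 9 then (1:ℤ) else 0) (if a = 11 ∧ n = 12 then (1:ℤ) else 0) (by exact if_congr (by omega) rfl rfl) (by exact if_congr (by omega) rfl rfl) (by exact if_congr (by omega) rfl rfl)
  have hR19 := RelG1 (a - 6) (n - 7) (if a = 7 ∧ n = 8 then (1:ℤ) else 0) (if a = 9 ∧ n = 11 then (1:ℤ) else 0) (if a = 11 ∧ n = 14 then (1:ℤ) else 0) (by exact if_congr (by omega) rfl rfl) (by exact if_congr (by omega) rfl rfl) (by exact if_congr (by omega) rfl rfl)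
  have hR20 := RelG1 (a - 6) (n - 9) (if a = 7 ∧ n = 10 then (1:ℤ) else 0) (if a = 9 ∧ n = 13 then (1:ℤ) else 0) (if a = 11 ∧ n = 16 then (1:ℤ) else 0) (by exact if_congr (by omega) rfl rfl) (by exact if_congr (by omega) rfl rfl) (by exact if_congr (by omega) rfl rfl)
  have hR21 := RelG1 (a - 6) (n - 11) (if a = 7 ∧ n = 12 then (1:ℤ) else 0) (if a = 9 ∧ n = 15 then (1:ℤ) else 0) (if a = 11 ∧ n = 18 then (1:ℤ) else 0) (by exact if_congr (by omega) rfl rfl) (by exact if_congr (by omega) rfl rfl) (by exact if_congr (by omega) rfl rfl)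
  have hR22 := RelG1 (a - 7) (n - 8) (if a = 8 ∧ n = 9 then (1:ℤ) else 0) (if a = 10 ∧ n = 12 then (1:ℤ) else 0) (if a = 12 ∧ n = 15 then (1:ℤ) else 0) (by exact if_congr (by omega) rfl rfl) (by exact if_congr (by omega) rfl rfl) (by exact if_congr (by omega) rfl rfl)
  have hR23 := RelG1 (a - 8) (n - 10) (if a = 9 ∧ n = 11 then (1:ℤ) else 0) (if a = 11 ∧ n = 14 then (1:ℤ) else 0) (if a = 13 ∧ n = 17 then (1:ℤ) else 0) (by exact if_congr (by omega) rfl rfl) (by exact if_congr (by omega) rfl rfl) (by exact if_congr (by omega) rfl rfl)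
  have hR24 := RelG1 (a - 8) (n - 12) (if a = 9 ∧ n = 13 then (1:ℤ) else 0) (if a = 11 ∧ n = 16 then (1:ℤ) else 0) (if a = 13 ∧ n = 19 then (1:ℤ) else 0) (by exact if_congr (by omega) rfl rfl) (by exact if_congr (by omega) rfl rfl) (by exact if_congr (by omega) rfl rfl)
  have hR25 := RelG1 (a - 8) (n - 14) (if a = 9 ∧ n = 15 then (1:ℤ) else 0) (if a = 11 ∧ n = 18 then (1:ℤ) else 0) (if a = 13 ∧ n = 21 then (1:ℤ) else 0) (by exact if_congr (by omega) rfl rfl) (by exact if_congr (by omega) rfl rfl) (by exact if_congr (by omega) rfl rfl)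
  have hR26 := RelG1 (a - 10) (n - 15) (if a = 11 ∧ n = 16 then (1:ℤ) else 0) (if a = 13 ∧ n = 19 then (1:ℤ) else 0) (if a = 15 ∧ n = 22 then (1:ℤ) else 0) (by exact if_congr (by omega) rfl rfl) (by exact if_congr (by omega) rfl rfl) (by exact if_congr (by omega) rfl rfl)
  have hR27 := RelG2 (a - 3) (n - 4) (if a = 4 ∧ n = 6 then (1:ℤ) else 0) (if a = 6 ∧ n = 11 then (1:ℤ) else 0) (if a = 8 ∧ n = 16 then (1:ℤ) else 0) (by exact if_congr (by omega) rfl rfl) (by exact if_congr (by omega) rfl rfl) (by exact if_congr (by omega) rfl rfl)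
  have hR28 := RelG2 (a - 5) (n - 5) (if a = 6 ∧ n = 7 then (1:ℤ) else 0) (if a = 8 ∧ n = 12 then (1:ℤ) else 0) (if a = 10 ∧ n = 17 then (1:ℤ) else 0) (by exact if_congr (by omega) rfl rfl) (by exact if_congr (by omega) rfl rfl) (by exact if_congr (by omega) rfl rfl)
  have hR29 := RelG2 (a - 6) (n - 6) (if a = 7 ∧ n = 8 then (1:ℤ) else 0) (if a = 9 ∧ n = 13 then (1:ℤ) else 0) (if a = 11 ∧ n = 18 then (1:ℤ) else 0) (by exact if_congr (by omega) rfl rfl) (by exact if_congr (by omega) rfl rfl) (by exact if_congr (by omega) rfl rfl)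
  have hR30 := RelG2 (a - 7) (n - 6) (if a = 8 ∧ n = 8 then (1:ℤ) else 0) (if a = 10 ∧ n = 13 then (1:ℤ) else 0) (if a = 12 ∧ n = 18 then (1:ℤ) else 0) (by exact if_congr (by omega) rfl rfl) (by exact if_congr (by omega) rfl rfl) (by exact if_congr (by omega) rfl rfl)
  have hR31 := RelG2 (a - 8) (n - 7) (if a = 9 ∧ n = 9 then (1:ℤ) else 0) (if a = 11 ∧ n = 14 then (1:ℤ) else 0) (if a = 13 ∧ n = 19 then (1:ℤ) else 0) (by exact if_congr (by omega) rfl rfl) (by exact if_congr (by omega) rfl rfl) (by exact if_congr (by omega) rfl rfl)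
  have hR32 := RelG2 (a - 8) (n - 9) (if a = 9 ∧ n = 11 then (1:ℤ) else 0) (if a = 11 ∧ n = 16 then (1:ℤ) else 0) (if a = 13 ∧ n = 21 then (1:ℤ) else 0) (by exact if_congr (by omega) rfl rfl) (by exact if_congr (by omega) rfl rfl) (by exact if_congr (by omega) rfl rfl)
  have hR33 := RelG2 (a - 10) (n - 10) (if a = 11 ∧ n = 12 then (1:ℤ) else 0) (if a = 13 ∧ n = 17 then (1:ℤ) else 0) (if a = 15 ∧ n = 22 then (1:ℤ) else 0) (by exact if_congr (by omega) rfl rfl) (by exact if_congr (by omega) rfl rfl) (by exact if_congr (by omega) rfl rfl)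
  have hF34 := FcStep 1 (2*a - 7) (2*n - 5) (if a = 4 ∧ n = 3 then (1:ℤ) else 0) (if a = 6 ∧ n = 6 then (1:ℤ) else 0) (by exact if_congr (by omega) rfl rfl) (by exact if_congr (by omega) rfl rfl)
  have hF35 := FcStep 1 (2*a - 11) (2*n - 7) (if a = 6 ∧ n = 4 then (1:ℤ) else 0) (if a = 8 ∧ n = 7 then (1:ℤ) else 0) (by exact if_congr (by omega) rfl rfl) (by exact if_congr (by omega) rfl rfl)
  have hF36 := FcStep 1 (2*a - 11) (2*n - 11) (if a = 6 ∧ n = 6 then (1:ℤ) else 0) (if a = 8 ∧ n = 9 then (1:ℤ) else 0) (by exact if_congr (by omega) rfl rfl) (by exact if_congr (by omega) rfl rfl)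
  have hF37 := FcStep 1 (2*a - 15) (2*n - 13) (if a = 8 ∧ n = 7 then (1:ℤ) else 0) (if a = 10 ∧ n = 10 then (1:ℤ) else 0) (by exact if_congr (by omega) rfl rfl) (by exact if_congr (by omega) rfl rfl)
  have hF38 := FcStep 1 (2*a - 11) (2*n - 15) (if a = 6 ∧ n = 8 then (1:ℤ) else 0) (if a = 8 ∧ n = 11 then (1:ℤ) else 0) (by exact if_congr (by omega) rfl rfl) (by exact if_congr (by omega) rfl rfl)
  have hF39 := FcStep 1 (2*a - 15) (2*n - 17) (if a = 8 ∧ n = 9 then (1:ℤ) else 0) (if a = 10 ∧ n = 12 then (1:ℤ) else 0) (by exact if_congr (by omega) rfl rfl) (by exact if_congr (by omega) rfl rfl)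
  have hF40 := FcStep 1 (2*a - 13) (2*n - 15) (if a = 7 ∧ n = 8 then (1:ℤ) else 0) (if a = 9 ∧ n = 11 then (1:ℤ) else 0) (by exact if_congr (by omega) rfl rfl) (by exact if_congr (by omega) rfl rfl)
  have hF41 := FcStep 1 (2*a - 17) (2*n - 17) (if a = 9 ∧ n = 9 then (1:ℤ) else 0) (if a = 11 ∧ n = 12 then (1:ℤ) else 0) (by exact if_congr (by omega) rfl rfl) (by exact if_congr (by omega) rfl rfl)
  have hF42 := FcStep 1 (2*a - 15) (2*n - 21) (if a = 8 ∧ n = 11 then (1:ℤ) else 0) (if a = 10 ∧ n = 14 then (1:ℤ) else 0) (by exact if_congr (by omega) rfl rfl) (by exact if_congr (by omega) rfl rfl)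
  have hF43 := FcStep 1 (2*a - 19) (2*n - 23) (if a = 10 ∧ n = 12 then (1:ℤ) else 0) (if a = 12 ∧ n = 15 then (1:ℤ) else 0) (by exact if_congr (by omega) rfl rfl) (by exact if_congr (by omega) rfl rfl)
  have hF44 := FcStep 1 (2*a - 17) (2*n - 25) (if a = 9 ∧ n = 13 then (1:ℤ) else 0) (if a = 11 ∧ n = 16 then (1:ℤ) else 0) (by exact if_congr (by omega) rfl rfl) (by exact if_congr (by omega) rfl rfl)
  have hF45 := FcStep 1 (2*a - 21) (2*n - 27) (if a = 11 ∧ n = 14 then (1:ℤ) else 0) (if a = 13 ∧ n = 17 then (1:ℤ) else 0) (by exact if_congr (by omega) rfl rfl) (by exact if_congr (by omega) rfl rfl)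
  have hF46 := FcStep 1 (2*a - 21) (2*n - 35) (if a = 11 ∧ n = 18 then (1:ℤ) else 0) (if a = 13 ∧ n = 21 then (1:ℤ) else 0) (by exact if_congr (by omega) rfl rfl) (by exact if_congr (by omega) rfl rfl)
  have hF47 := FcStep 1 (2*a - 25) (2*n - 37) (if a = 13 ∧ n = 19 then (1:ℤ) else 0) (if a = 15 ∧ n = 22 then (1:ℤ) else 0) (by exact if_congr (by omega) rfl rfl) (by exact if_congr (by omega) rfl rfl)
  have hF48 := FcStep 2 (2*a - 7) (2*n - 10) (if a = 4 ∧ n = 6 then (1:ℤ) else 0) (if a = 6 ∧ n = 11 then (1:ℤ) else 0) (by exact if_congr (by omega) rfl rfl) (by exact if_congr (by omega) rfl rfl)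
  have hF49 := FcStep 2 (2*a - 11) (2*n - 12) (if a = 6 ∧ n = 7 then (1:ℤ) else 0) (if a = 8 ∧ n = 12 then (1:ℤ) else 0) (by exact if_congr (by omega) rfl rfl) (by exact if_congr (by omega) rfl rfl)
  have hF50 := FcStep 2 (2*a - 15) (2*n - 22) (if a = 8 ∧ n = 12 then (1:ℤ) else 0) (if a = 10 ∧ n = 17 then (1:ℤ) else 0) (by exact if_congr (by omega) rfl rfl) (by exact if_congr (by omega) rfl rfl)
  have hF51 := FcStep 2 (2*a - 11) (2*n - 20) (if a = 6 ∧ n = 11 then (1:ℤ) else 0) (if a = 8 ∧ n = 16 then (1:ℤ) else 0) (by exact if_congr (by omega) rfl rfl) (by exact if_congr (by omega) rfl rfl)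
  have hF52 := FcStep 2 (2*a - 13) (2*n - 14) (if a = 7 ∧ n = 8 then (1:ℤ) else 0) (if a = 9 ∧ n = 13 then (1:ℤ) else 0) (by exact if_congr (by omega) rfl rfl) (by exact if_congr (by omega) rfl rfl)
  have hF53 := FcStep 2 (2*a - 17) (2*n - 20) (if a = 9 ∧ n = 11 then (1:ℤ) else 0) (if a = 11 ∧ n = 16 then (1:ℤ) else 0) (by exact if_congr (by omega) rfl rfl) (by exact if_congr (by omega) rfl rfl)
  have hF54 := FcStep 2 (2*a - 15) (2*n - 14) (if a = 8 ∧ n = 8 then (1:ℤ) else 0) (if a = 10 ∧ n = 13 then (1:ℤ) else 0) (by exact if_congr (by omega) rfl rfl) (by exact if_congr (by omega) rfl rfl)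
  have hF55 := FcStep 2 (2*a - 19) (2*n - 24) (if a = 10 ∧ n = 13 then (1:ℤ) else 0) (if a = 12 ∧ n = 18 then (1:ℤ) else 0) (by exact if_congr (by omega) rfl rfl) (by exact if_congr (by omega) rfl rfl)
  have hF56 := FcStep 2 (2*a - 17) (2*n - 16) (if a = 9 ∧ n = 9 then (1:ℤ) else 0) (if a = 11 ∧ n = 14 then (1:ℤ) else 0) (by exact if_congr (by omega) rfl rfl) (by exact if_congr (by omega) rfl rfl)
  have hF57 := FcStep 2 (2*a - 21) (2*n - 22) (if a = 11 ∧ n = 12 then (1:ℤ) else 0) (if a = 13 ∧ n = 17 then (1:ℤ) else 0) (by exact if_congr (by omega) rfl rfl) (by exact if_congr (by omega) rfl rfl)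
  have hF58 := FcStep 2 (2*a - 17) (2*n - 24) (if a = 9 ∧ n = 13 then (1:ℤ) else 0) (if a = 11 ∧ n = 18 then (1:ℤ) else 0) (by exact if_congr (by omega) rfl rfl) (by exact if_congr (by omega) rfl rfl)
  have hF59 := FcStep 2 (2*a - 21) (2*n - 30) (if a = 11 ∧ n = 16 then (1:ℤ) else 0) (if a = 13 ∧ n = 21 then (1:ℤ) else 0) (by exact if_congr (by omega) rfl rfl) (by exact if_congr (by omega) rfl rfl)
  have hF60 := FcStep 2 (2*a - 21) (2*n - 26) (if a = 11 ∧ n = 14 then (1:ℤ) else 0) (if a = 13 ∧ n = 19 then (1:ℤ) else 0) (by exact if_congr (by omega) rfl rfl) (by exact if_congr (by omega) rfl rfl)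
  have hF61 := FcStep 2 (2*a - 25) (2*n - 32) (if a = 13 ∧ n = 17 then (1:ℤ) else 0) (if a = 15 ∧ n = 22 then (1:ℤ) else 0) (by exact if_congr (by omega) rfl rfl) (by exact if_congr (by omega) rfl rfl)
  ring_nf at hR0 hR1 hR2 hR3 hR4 hR5 hR6 hR7 hR8 hR9 hR10 hR11 hR12 hR13 hR14 hR15 hR16 hR17 hR18 hR19 hR20 hR21 hR22 hR23 hR24 hR25 hR26 hR27 hR28 hR29 hR30 hR31 hR32 hR33 hF34 hF35 hF36 hF37 hF38 hF39 hF40 hF41 hF42 hF43 hF44 hF45 hF46 hF47 hF48 hF49 hF50 hF51 hF52 hF53 hF54 hF55 hF56 hF57 hF58 hF59 hF60 hF61 ⊢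
  linear_combination (-1) * hR0 + (1) * hR1 + (1) * hR2 + (1) * hR3 + (-1) * hR4 + (-2) * hR5 + (1) * hR6 + (1) * hR7 + (-2) * hR8 + (1) * hR9 + (-1) * hR10 + (-2) * hR11 + (1) * hR12 + (-2) * hR13 + (3) * hR14 + (-1) * hR15 + (2) * hR16 + (2) * hR17 + (1) * hR18 + (-2) * hR19 + (3) * hR20 + (-1) * hR21 + (-2) * hR22 + (-2) * hR23 + (1) * hR24 + (-1) * hR25 + (1) * hR26 + (1) * hR27 + (-2) * hR28 + (-1) * hR29 + (1) * hR30 + (1) * hR31 + (1) * hR32 + (-1) * hR33 + (-4) * hF34 + (4) * hF35 + (4) * hF36 + (-4) * hF37 + (4) * hF38 + (-4) * hF39 + (4) * hF40 + (-4) * hF41 + (-4) * hF42 + (4) * hF43 + (-8) * hF44 + (8) * hF45 + (4) * hF46 + (-4) * hF47 + (4) * hF48 + (-8) * hF49 + (8) * hF50 + (-4) * hF51 + (-4) * hF52 + (4) * hF53 + (4) * hF54 + (-4) * hF55 + (4) * hF56 + (-4) * hF57 + (4) * hF58 + (-4) * hF59 + (-4) * hF60 + (4) * hF61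


/-- The minimal-degree homogeneous recursion
`r₀ F_{T(2,3)}(x,q)² + r₁ F_{T(2,3)}(xq,q)² + r₂ F_{T(2,3)}(xq²,q)² + r₃ F_{T(2,3)}(xq³,q)² = 0`
satisfied by the proposed connected-sum series of `T(2,3) # T(2,3)`, stated
coefficientwise in `ℤ[x,x⁻¹]((q))`:  for every `a, n ∈ ℤ`, the coefficient of
`x^a q^n` in `r₀ G₀ + r₁ G₁ + r₂ G₂ + r₃ G₃` vanishes, where `(1/4)G_j = F_{T(2,3)}(xq^j,q)²`. -/
theorem trefoil_connected_sum_recursion :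
    ∀ a n : ℤ,
      (∑ j ∈ Finset.range 4, ∑ α ∈ (trefoilRec j).support,
        ∑ β ∈ ((trefoilRec j).coeff α).support,
          ((trefoilRec j).coeff α).coeff β * coeffG j (a - (α : ℤ)) (n - (β : ℤ))) = 0 := by
  intro a n
  rw [Finset.sum_range_succ, Finset.sum_range_succ, Finset.sum_range_succ,
    Finset.sum_range_one]
  rw [show trefoilRec 0 = trefoilR0 from rfl, show trefoilRec 1 = trefoilR1 from rfl,
    show trefoilRec 2 = trefoilR2 from rfl, show trefoilRec 3 = trefoilR3 from rfl]
  rw [SS0 a n, SS1 a n, SS2 a n, SS3 a n]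
  linarith [trefoil_key a n]
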